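/- arXiv:2002.10571 — 11 statements merged into one kernel-verified Lean document; each statement's English description precedes it below -/
import Mathlib

section
/- With the notation of the context, the map ψ_G : G → G defined on the semidirect product by ψ_G(x, e) = (ω_{t²}·x, e) (multiplication by ω_{t²} on the field component, identity on E) is a well-defined group automorphism of G which is class-preserving (it maps every element of G to a conjugate of itself) but is not an inner automorphism of G. In particular, G has a non-inner class-preserving automorphism, i.e. Out_c(G) is non-trivial. -/
/-!
Write `q = p ^ n`, so that `|K| = q ^ t`, `q ≡ 1 [MOD t ^ 2]`, `ωt2 ^ q = ωt2`, and
`s t (q - 1) = q ^ t - 1` with `s ≡ 1 [MOD t]`. Every element of `E` has the form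
`v ↦ μ v ^ (q ^ c)` with `μ ^ (s t) = ωt2 ^ (c s t)`; in particular it commutes with multiplication
by `ωt2`, which makes `ψ` an automorphism. Conjugation by `(u, f)` acts on `K` through `f`, so if
`ψ` were inner, multiplication by `ωt2` would lie in `E`; then `μ = ωt2` and `t ∣ c`, so
`ωt2 ^ (s t) = 1`, forcing `t ∣ s`, which is absurd.

For class preservation, conjugating `(x, e)` by `(u, f)` with `f` commuting with `e` gives
`(u + f x - e u, e)`, so it suffices to find such an `f ∈ E` with `ωt2 x - f x ∈ (1 - e) K`.
An additive Hilbert 90 holds for `e`: the image of `1 - e` is the kernel of the orbit sum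
`T = ∑_{k < ord e} e ^ k`. Indeed both compositions of `1 - e` and `T` vanish, so by counting it is
enough that every fixed point of `e` lies in the image of `T`; a nonzero fixed point `w` turns `e`
into `v ↦ w (v / w) ^ (q ^ c)`, and Dedekind's independence of characters gives `T ≠ 0`. If
`T x = 0` take `f = 1`. Otherwise `w = T x` is fixed by `e`, and `f : v ↦ ωt2 w (v / w) ^ q` lies
in `E` (as `w ^ (1 - q)` is an `s t`-th root of unity, a power of `ωs ωt2 ^ t`), commutes with `e`,
and satisfies `T (f x) = f w = ωt2 w = T (ωt2 x)`.
-/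

/-- The multiplicative group structure on `AddAut A` (Mathlib's own is additive), with
`(g * h) x = g (h x)`. -/
instance AddAut.group {A : Type*} [Add A] : Group (AddAut A) where
  mul g h := AddEquiv.trans h g
  one := AddEquiv.refl _
  inv := AddEquiv.symm
  mul_assoc _ _ _ := rfl
  one_mul _ := rfl
  mul_one _ := rfl
  inv_mul_cancel := AddEquiv.self_trans_symm

def addAutSubgroupHom (K : Type*) [AddCommGroup K] (E : Subgroup (AddAut K)) :
    E →* MulAut (Multiplicative K) where
  toFun e := AddEquiv.toMultiplicative e.1
  map_one' := rfl
  map_mul' _ _ := rfl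

open Finset

namespace SemidirectProduct

variable {N G : Type*} [Group N] [Group G] {φ : G →* MulAut N}

theorem mk_mul_mk_mul_inv_of_commute (n x : N) {g e : G} (h : Commute g e) :
    (⟨n, g⟩ * ⟨x, e⟩ * ⟨n, g⟩⁻¹ : N ⋊[φ] G) = ⟨n * φ g x * φ e n⁻¹, e⟩ := by
  have hconj : g * e * g⁻¹ = e := by rw [h.eq, mul_inv_cancel_right]
  ext
  · simp only [mul_left, mul_right, inv_left, ← MulAut.mul_apply, ← map_mul, hconj]
  · simp [hconj]

theorem mul_inl_mul_inv {N : Type*} [CommGroup N] {φ : G →* MulAut N} (y : N ⋊[φ] G) (x : N) :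
    y * inl x * y⁻¹ = inl (φ y.right x) := by
  ext
  · simp only [mul_left, mul_right, inv_left, left_inl, right_inl, mul_one,
      ← MulAut.mul_apply, ← map_mul, mul_inv_cancel, map_one, MulAut.one_apply]
    rw [mul_comm y.left, mul_inv_cancel_right]
  · simp

end SemidirectProduct

theorem AddMonoidHom.range_eq_ker_of_range_eq_ker {A : Type*} [AddCommGroup A] [Finite A]
    {S T : A →+ A} (hTS : T.range = S.ker) (hST : S.range ≤ T.ker) : S.range = T.ker := by
  refine AddSubgroup.eq_of_le_of_card_ge hST (Nat.le_of_eq ?_)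
  have hS := S.ker.card_mul_index
  have hT := T.ker.card_mul_index
  rw [AddSubgroup.index_ker, ← hTS] at hS
  rw [AddSubgroup.index_ker] at hT
  exact Nat.eq_of_mul_eq_mul_left Nat.card_pos (by rw [hS, mul_comm, hT])

theorem exists_sum_monoidHom_apply_ne_zero {G L ι : Type*} [MulOneClass G] [CommRing L]
    [IsDomain L] {χ : ι → G →* L} {s : Finset ι} (hs : s.Nonempty) (hχ : Set.InjOn χ s) :
    ∃ g, ∑ i ∈ s, χ i g ≠ 0 := by
  classical
  by_contra! h
  obtain ⟨i, hi⟩ := hs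
  have hsum : ∑ ψ ∈ s.image χ, (1 : L) • (ψ : G → L) = 0 := by
    rw [sum_image hχ]
    ext g
    simpa using h g
  exact one_ne_zero (linearIndependent_iff'.mp (linearIndependent_monoidHom G L) _ _ hsum _
    (mem_image_of_mem χ hi))

theorem pow_pow_eq_self_of_pow_eq_self {M : Type*} [Monoid M] {a : M} {q : ℕ} (h : a ^ q = a)
    (c : ℕ) : a ^ q ^ c = a := by
  induction c with
  | zero => rw [pow_zero, pow_one]
  | succ c ih => rw [pow_succ, pow_mul, ih, h]

theorem Nat.sum_range_pow_modEq {q m : ℕ} (hq : q ≡ 1 [MOD m]) (t : ℕ) :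
    ∑ i ∈ range t, q ^ i ≡ t [MOD m] := by
  induction t with
  | zero => rfl
  | succ t ih =>
    rw [sum_range_succ]
    exact ih.add (by simpa using hq.pow t)

theorem Nat.pow_sub_one_div_spec {q t s : ℕ} (hq : 1 < q) (ht : 0 < t)
    (hqt : q ≡ 1 [MOD t ^ 2]) (hs : s = (q ^ t - 1) / (t * (q - 1))) :
    s * t * (q - 1) = q ^ t - 1 ∧ s ≡ 1 [MOD t] := by
  have hsum := Nat.sum_range_pow_modEq hqt t
  rw [sq] at hsum
  obtain ⟨s', hs'⟩ : t ∣ ∑ i ∈ range t, q ^ i :=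
    Nat.modEq_zero_iff_dvd.mp ((hsum.of_mul_right t).trans (Nat.modEq_zero_iff_dvd.mpr dvd_rfl))
  have hgeom : q ^ t - 1 = s' * (t * (q - 1)) := by
    rw [← geom_sum_mul_of_one_le hq.le, hs']
    ring
  have hss' : s = s' := by
    rw [hs, hgeom, Nat.mul_div_cancel _ (Nat.mul_pos ht (Nat.sub_pos_of_lt hq))]
  subst hss'
  refine ⟨by rw [hgeom, mul_assoc], Nat.ModEq.mul_left_cancel' ht.ne' ?_⟩
  rwa [mul_one, ← hs']

theorem IsPrimitiveRoot.mul_of_coprime {M : Type*} [CommMonoid M] {a b : M} {m n : ℕ}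
    (ha : IsPrimitiveRoot a m) (hb : IsPrimitiveRoot b n) (hmn : m.Coprime n) :
    IsPrimitiveRoot (a * b) (m * n) := by
  rw [ha.eq_orderOf, hb.eq_orderOf] at hmn ⊢
  rw [← (Commute.all a b).orderOf_mul_eq_mul_orderOf_of_coprime hmn]
  exact IsPrimitiveRoot.orderOf _

namespace AddAut

@[simp]
theorem one_apply' {A : Type*} [Add A] (v : A) : (1 : AddAut A) v = v := rfl

theorem mul_apply' {A : Type*} [Add A] (e₁ e₂ : AddAut A) (v : A) :
    (e₁ * e₂) v = e₁ (e₂ v) := rfl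

def toAddMonoidEnd (A : Type*) [AddZeroClass A] : AddAut A →* AddMonoid.End A where
  toFun e := e.toAddMonoidHom
  map_one' := rfl
  map_mul' _ _ := rfl

section OrbitSum

variable {A : Type*} [AddCommGroup A] (e : AddAut A)

noncomputable def orbitSum : AddMonoid.End A :=
  ∑ k ∈ range (orderOf e), toAddMonoidEnd A e ^ k

theorem orbitSum_apply (v : A) : orbitSum e v = ∑ k ∈ range (orderOf e), (e ^ k) v := by
  simp only [orbitSum, ← map_pow]
  exact AddMonoidHom.finsetSum_apply _ _ _

@[simp]
theorem one_sub_toAddMonoidEnd_apply (v : A) : (1 - toAddMonoidEnd A e) v = v - e v := rfl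

theorem one_sub_mul_orbitSum : (1 - toAddMonoidEnd A e) * orbitSum e = 0 := by
  rw [orbitSum, mul_neg_geom_sum, ← map_pow, pow_orderOf_eq_one, map_one, sub_self]

theorem orbitSum_mul_one_sub : orbitSum e * (1 - toAddMonoidEnd A e) = 0 := by
  rw [orbitSum, geom_sum_mul_neg, ← map_pow, pow_orderOf_eq_one, map_one, sub_self]

theorem apply_orbitSum (v : A) : e (orbitSum e v) = orbitSum e v := by
  have h := congr($(one_sub_mul_orbitSum e) v)
  rw [AddMonoid.End.coe_mul, Function.comp_apply, one_sub_toAddMonoidEnd_apply,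
    AddMonoid.End.zero_apply, sub_eq_zero] at h
  exact h.symm

theorem range_one_sub_eq_ker_orbitSum [Finite A]
    (h : (1 - toAddMonoidEnd A e).ker ≤ (orbitSum e).range) :
    (1 - toAddMonoidEnd A e).range = (orbitSum e).ker :=
  AddMonoidHom.range_eq_ker_of_range_eq_ker
    (le_antisymm ((AddMonoidHom.range_le_ker_iff _ _).mpr (one_sub_mul_orbitSum e)) h)
    ((AddMonoidHom.range_le_ker_iff _ _).mpr (orbitSum_mul_one_sub e))

theorem commute_orbitSum {g : AddMonoid.End A} (h : Commute g (toAddMonoidEnd A e)) :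
    Commute g (orbitSum e) :=
  Commute.sum_right _ _ _ fun _ _ => h.pow_right _

end OrbitSum

section TwistedFrobenius

variable {K : Type*} [Field K] {q c : ℕ} {f : AddAut K} {μ w : K}

theorem pow_apply_eq_mul_pow (hf : ∀ v, f v = μ * v ^ q ^ c) (hμ : μ ^ q ^ c = μ) (m : ℕ)
    (v : K) : (f ^ m) v = μ ^ m * v ^ q ^ (c * m) := by
  induction m with
  | zero => simp
  | succ m ih =>
    have hμm : (μ ^ m) ^ q ^ c = μ ^ m := by rw [← pow_mul, mul_comm, pow_mul, hμ]
    rw [pow_succ', mul_apply', hf, ih, mul_pow, hμm, ← pow_mul, ← pow_add, mul_add_one]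
    ring

theorem apply_mul_of_pow_eq_self (hf : ∀ v, f v = μ * v ^ q ^ c) {ω : K} (hω : ω ^ q = ω)
    (v : K) : f (ω * v) = ω * f v := by
  rw [hf, hf, mul_pow, pow_pow_eq_self_of_pow_eq_self hω]
  ring

theorem apply_eq_mul_div_pow_of_apply_eq_self (hf : ∀ v, f v = μ * v ^ q ^ c) (hw : w ≠ 0)
    (hfw : f w = w) (v : K) : f v = w * (v / w) ^ q ^ c := by
  rw [hf] at hfw
  rw [hf, (eq_div_iff (pow_ne_zero _ hw)).mpr hfw, div_pow]
  ring

theorem pow_apply_eq_mul_div_pow (hw : w ≠ 0) (hf : ∀ v, f v = w * (v / w) ^ q ^ c) (k : ℕ)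
    (v : K) : (f ^ k) v = w * (v / w) ^ q ^ (c * k) := by
  induction k with
  | zero => simp [mul_div_cancel₀ _ hw]
  | succ k ih =>
    rw [pow_succ', mul_apply', hf, ih, mul_div_cancel_left₀ _ hw, ← pow_mul, ← pow_add, mul_add_one]

theorem mem_range_orbitSum_of_apply_eq_self [Finite K] (hf : ∀ v, f v = μ * v ^ q ^ c)
    (hw : w ≠ 0) (hfw : f w = w) : w ∈ (orbitSum f).range := by
  have hf' := apply_eq_mul_div_pow_of_apply_eq_self hf hw hfw
  have hpow := pow_apply_eq_mul_div_pow hw hf'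
  have horbit : ∀ r, orbitSum f (w * r) = w * ∑ k ∈ range (orderOf f), r ^ q ^ (c * k) := by
    intro r
    rw [orbitSum_apply, mul_sum]
    exact sum_congr rfl fun k _ => by rw [hpow, mul_div_cancel_left₀ _ hw]
  -- Dedekind: the distinct characters `r ↦ r ^ q ^ (c * k)`, `k < orderOf f`, cannot sum to zero
  obtain ⟨r, hr⟩ : ∃ r : K, ∑ k ∈ range (orderOf f), r ^ q ^ (c * k) ≠ 0 := by
    refine exists_sum_monoidHom_apply_ne_zero (χ := fun k => (powMonoidHom (q ^ (c * k)) : K →* K))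
      (nonempty_range_iff.mpr (orderOf_pos f).ne') fun i hi j hj hij => ?_
    refine pow_injOn_Iio_orderOf (mem_range.mp hi) (mem_range.mp hj) (AddEquiv.ext fun v => ?_)
    change (f ^ i) v = (f ^ j) v
    rw [hpow, hpow]
    exact congr(w * $(DFunLike.congr_fun hij (v / w)))
  set a := ∑ k ∈ range (orderOf f), r ^ q ^ (c * k)
  have ha : a ^ q ^ c = a := by
    have h := apply_orbitSum f (w * r)
    rw [horbit, hf', mul_div_cancel_left₀ _ hw] at h
    exact mul_left_cancel₀ hw h
  have hak : ∀ k, a ^ q ^ (c * k) = a := fun k => by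
    rw [pow_mul, pow_pow_eq_self_of_pow_eq_self ha]
  refine ⟨w * (r / a), (horbit _).trans ?_⟩
  simp_rw [div_pow, hak]
  rw [← sum_div, div_self hr, mul_one]

theorem range_one_sub_eq_ker_orbitSum_of_apply_eq [Finite K] (hf : ∀ v, f v = μ * v ^ q ^ c) :
    (1 - toAddMonoidEnd K f).range = (orbitSum f).ker := by
  refine range_one_sub_eq_ker_orbitSum f fun w hw => ?_
  replace hw : w - f w = 0 := hw
  rw [sub_eq_zero] at hw
  by_cases hw0 : w = 0
  · exact hw0 ▸ zero_mem _
  · exact mem_range_orbitSum_of_apply_eq_self hf hw0 hw.symm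

theorem exists_commute_add_sub_eq_mul [Finite K] {E : Subgroup (AddAut K)} {ω : K}
    (hω : ω ^ q = ω) (hE : ∀ e ∈ E, ∃ (μ : K) (c : ℕ), ∀ v, e v = μ * v ^ q ^ c)
    (hF : ∀ a : K, a ≠ 0 → ∃ f ∈ E, ∀ v, f v = ω * a * (v / a) ^ q) {e : AddAut K}
    (he : e ∈ E) (x : K) : ∃ f ∈ E, Commute f e ∧ ∃ u, u + f x - e u = ω * x := by
  obtain ⟨μ, c, hμ⟩ := hE e he
  have hcoboundary : ∀ y, orbitSum e y = 0 → ∃ u, u - e u = y := fun y hy => by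
    have hy' : y ∈ (orbitSum e).ker := hy
    rw [← range_one_sub_eq_ker_orbitSum_of_apply_eq hμ] at hy'
    obtain ⟨u, hu⟩ := hy'
    exact ⟨u, hu⟩
  have hωT : orbitSum e (ω * x) = ω * orbitSum e x :=
    (congr($((commute_orbitSum e (g := AddMonoid.End.mulLeft ω)
      (AddMonoidHom.ext fun v => (apply_mul_of_pow_eq_self hμ hω v).symm)).eq) x)).symm
  by_cases hx : orbitSum e x = 0
  · obtain ⟨u, hu⟩ := hcoboundary (ω * x - x) (by rw [map_sub, hωT, hx, mul_zero, sub_zero])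
    exact ⟨1, one_mem E, Commute.one_left e, u, by rw [one_apply']; linear_combination hu⟩
  set w := orbitSum e x
  have he' := apply_eq_mul_div_pow_of_apply_eq_self hμ hx (apply_orbitSum e x)
  obtain ⟨f, hfE, hf⟩ := hF w hx
  have hfe : Commute f e := AddEquiv.ext fun v => by
    have hew : e v / w = (v / w) ^ q ^ c := by rw [he']; field_simp
    have hfw : f v / w = ω * (v / w) ^ q := by rw [hf]; field_simp
    rw [mul_apply', mul_apply', hf (e v), he' (f v), hew, hfw, mul_pow,
      pow_pow_eq_self_of_pow_eq_self hω, ← pow_mul, ← pow_mul, mul_comm (q ^ c)]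
    ring
  have hfT : f w = orbitSum e (f x) :=
    congr($((commute_orbitSum e (hfe.map (toAddMonoidEnd K))).eq) x)
  obtain ⟨u, hu⟩ := hcoboundary (ω * x - f x) (by
    rw [map_sub, hωT, ← hfT, hf, div_self hx, one_pow, mul_one, sub_self])
  exact ⟨f, hfE, hfe, u, by linear_combination hu⟩

theorem exists_mul_pow_of_mem_closure [Finite K] {S : Set (AddAut K)} {ω : K} {N : ℕ}
    (hω : ω ^ q = ω)
    (hS : ∀ f ∈ S, ∃ (μ : K) (c : ℕ), (∀ v, f v = μ * v ^ q ^ c) ∧ μ ^ N = ω ^ (c * N))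
    {f : AddAut K} (hf : f ∈ Subgroup.closure S) :
    ∃ (μ : K) (c : ℕ), (∀ v, f v = μ * v ^ q ^ c) ∧ μ ^ N = ω ^ (c * N) := by
  rw [← Subgroup.mem_toSubmonoid, Subgroup.closure_toSubmonoid_of_finite] at hf
  induction hf using Submonoid.closure_induction with
  | mem f hf => exact hS f hf
  | one => exact ⟨1, 0, by simp, by simp⟩
  | mul f g _ _ ihf ihg =>
    obtain ⟨μ, c, hf, hμ⟩ := ihf
    obtain ⟨ν, d, hg, hν⟩ := ihg
    refine ⟨μ * ν ^ q ^ c, c + d, fun v => ?_, ?_⟩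
    · rw [mul_apply', hg, hf, mul_pow, ← pow_mul, ← pow_add, mul_assoc, add_comm d]
    · have hνc : (ν ^ q ^ c) ^ N = ω ^ (d * N) := by
        rw [← pow_mul, mul_comm, pow_mul, hν, ← pow_mul, mul_comm, pow_mul,
          pow_pow_eq_self_of_pow_eq_self hω]
      rw [mul_pow, hμ, hνc, ← pow_add, add_mul]

end TwistedFrobenius

end AddAut

section FiniteField

variable {K : Type*} [Field K] [Fintype K] {q t s : ℕ}

theorem dvd_of_forall_pow_pow_eq_self (hq : 1 < q) (hcard : Fintype.card K = q ^ t) {c : ℕ}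
    (h : ∀ v : K, v ^ q ^ c = v) : t ∣ c := by
  have ht : t ≠ 0 := by
    rintro rfl
    exact (Fintype.one_lt_card (α := K)).ne' hcard
  have hc : q ^ c = q ^ (c % t) * (q ^ t) ^ (c / t) := by
    rw [← pow_mul, ← pow_add, Nat.mod_add_div]
  have hmod : ∀ v : K, v ^ q ^ (c % t) = v := fun v => by
    conv_rhs => rw [← h v, hc, pow_mul', ← hcard, FiniteField.pow_card_pow]
  have hdvd : q ^ t - 1 ∣ q ^ (c % t) - 1 := by
    rw [← hcard, ← FiniteField.forall_pow_eq_one_iff]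
    intro x
    refine Units.ext (mul_left_cancel₀ x.ne_zero ?_)
    rw [Units.val_pow_eq_pow_val, Units.val_one, mul_one, ← pow_succ',
      Nat.sub_add_cancel (Nat.one_le_pow _ _ (by omega)), hmod]
  have hlt : q ^ (c % t) - 1 < q ^ t - 1 := by
    have := Nat.pow_lt_pow_right hq (Nat.mod_lt c (Nat.pos_of_ne_zero ht))
    have := Nat.one_le_pow (c % t) q (by omega)
    omega
  have hone : q ^ (c % t) = 1 := by
    have := Nat.eq_zero_of_dvd_of_lt hdvd hlt
    have := Nat.one_le_pow (c % t) q (by omega)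
    omega
  exact Nat.dvd_of_mod_eq_zero ((Nat.pow_eq_one.mp hone).resolve_left hq.ne')

theorem exists_mem_closure_apply_eq_mul_div_pow {ωs ω : K} {mωs F : AddAut K} (hq : 1 < q)
    (hcard : Fintype.card K = q ^ t) (hst : s * t * (q - 1) = q ^ t - 1)
    (hζ : IsPrimitiveRoot (ωs * ω ^ t) (s * t)) (hω : ω ^ q = ω)
    (hmωs : ∀ v, mωs v = ωs * v) (hF : ∀ v, F v = ω * v ^ q) {a : K} (ha : a ≠ 0) :
    ∃ f ∈ Subgroup.closure {mωs, F}, ∀ v, f v = ω * a * (v / a) ^ q := by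
  have hst0 : NeZero (s * t) := ⟨fun h => by
    have := Fintype.one_lt_card (α := K)
    rw [h, zero_mul] at hst
    omega⟩
  obtain ⟨k, -, hk⟩ := hζ.eq_pow_of_pow_eq_one (ξ := a⁻¹ ^ (q - 1)) (by
    rw [← pow_mul, mul_comm, hst, ← hcard]
    exact FiniteField.pow_card_sub_one_eq_one _ (inv_ne_zero ha))
  refine ⟨mωs ^ k * F ^ (t * k + 1), mul_mem (pow_mem (Subgroup.subset_closure (by simp)) _)
    (pow_mem (Subgroup.subset_closure (by simp)) _), fun v => ?_⟩
  rw [AddAut.mul_apply', AddAut.pow_apply_eq_mul_pow (f := F) (c := 1) (by simpa using hF)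
    (by rwa [pow_one]), AddAut.pow_apply_eq_mul_pow (f := mωs) (q := q) (c := 0)
    (by simpa using hmωs) (by rw [pow_zero, pow_one]), zero_mul, pow_zero, pow_one, one_mul,
    pow_succ q, pow_mul v, pow_mul q, ← hcard, FiniteField.pow_card_pow]
  have ha' : a * (v / a) ^ q = a⁻¹ ^ (q - 1) * v ^ q := by
    rw [div_pow, ← pow_sub_one_mul (by omega : q ≠ 0) a, inv_pow]
    field_simp
  rw [mul_assoc ω, ha', ← hk, mul_pow, ← pow_mul, pow_succ]
  ring

theorem AddAut.not_forall_apply_eq_mul {ω μ : K} {f : AddAut K} {c : ℕ} (hq : 1 < q)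
    (ht : 1 < t) (hcard : Fintype.card K = q ^ t) (hω : IsPrimitiveRoot ω (t ^ 2))
    (hcop : s.Coprime t) (hf : ∀ v, f v = μ * v ^ q ^ c) (hμ : μ ^ (s * t) = ω ^ (c * (s * t))) :
    ¬ ∀ v, f v = ω * v := by
  intro h
  have hω0 : ω ≠ 0 := hω.ne_zero (by positivity)
  have hμω : μ = ω := by simpa using (hf 1).symm.trans (h 1)
  obtain ⟨d, rfl⟩ : t ∣ c := dvd_of_forall_pow_pow_eq_self hq hcard fun v => by
    have hv := (hf v).symm.trans (h v)
    rw [hμω] at hv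
    exact mul_left_cancel₀ hω0 hv
  have hst : ω ^ (s * t) = 1 := by
    rw [← hμω, hμ, show t * d * (s * t) = t ^ 2 * (d * s) by ring, pow_mul, hω.pow_eq_one, one_pow]
  have hts : t ∣ s := Nat.dvd_of_mul_dvd_mul_right (k := t) (by omega)
    (by rw [← sq]; exact (hω.pow_eq_one_iff_dvd _).mp hst)
  exact ht.ne' (hcop.symm.eq_one_of_dvd hts)

end FiniteField

section SemidirectProduct

variable {K : Type*} [AddCommGroup K] {E : Subgroup (AddAut K)}

theorem exists_twist_classPreserving_not_inner {α : AddAut K} (hαE : ∀ g ∈ E, Commute g α)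
    (hcp : ∀ e ∈ E, ∀ x, ∃ f ∈ E, Commute f e ∧ ∃ u, u + f x - e u = α x) (hα : α ∉ E) :
    ∃ ψ : MulAut (Multiplicative K ⋊[addAutSubgroupHom K E] E),
      (∀ a, ψ a = ⟨Multiplicative.ofAdd (α (Multiplicative.toAdd a.left)), a.right⟩) ∧
      (∀ a, ∃ y, ψ a = y * a * y⁻¹) ∧ ¬ ∃ y, ∀ a, ψ a = y * a * y⁻¹ := by
  refine ⟨SemidirectProduct.congr (AddEquiv.toMultiplicative α) (MulEquiv.refl E)
    fun g => MulEquiv.ext fun v => congrArg Multiplicative.ofAdd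
      (DFunLike.congr_fun (hαE g.1 g.2).eq.symm _), fun _ => rfl, ?_, ?_⟩
  · rintro ⟨x, e⟩
    obtain ⟨f, hf, hfe, u, hu⟩ := hcp e.1 e.2 (Multiplicative.toAdd x)
    refine ⟨⟨Multiplicative.ofAdd u, ⟨f, hf⟩⟩, ?_⟩
    rw [SemidirectProduct.mk_mul_mk_mul_inv_of_commute _ _ (Subtype.ext hfe : Commute ⟨f, hf⟩ e)]
    refine SemidirectProduct.ext ?_ rfl
    change Multiplicative.ofAdd (α x.toAdd) = Multiplicative.ofAdd (u + f x.toAdd + e.1 (-u))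
    rw [map_neg, ← hu, sub_eq_add_neg]
  · rintro ⟨y, hy⟩
    refine hα ((AddEquiv.ext fun v => ?_ : y.right.1 = α) ▸ y.right.2)
    have h := congrArg SemidirectProduct.left (hy (SemidirectProduct.inl (Multiplicative.ofAdd v)))
    rw [SemidirectProduct.mul_inl_mul_inv] at h
    exact congrArg Multiplicative.toAdd h.symm

end SemidirectProduct

theorem stmt0_general (p t n s : ℕ) (ht : 1 < t)
    (hnmod : p ^ n ≡ 1 [MOD t ^ 2])
    (hs : s = (p ^ (n * t) - 1) / (t * (p ^ n - 1)))
    (K : Type) [Field K] [Fintype K] (hK : Fintype.card K = p ^ (n * t))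
    (ωs ωt2 : K) (hωs : IsPrimitiveRoot ωs s) (hωt2 : IsPrimitiveRoot ωt2 (t ^ 2))
    (mωs mωt2 Φ : AddAut K)
    (hmωs : ∀ x : K, mωs x = ωs * x) (hmωt2 : ∀ x : K, mωt2 x = ωt2 * x)
    (hΦ : ∀ x : K, Φ x = x ^ (p ^ n)) :
    ∃ ψ : MulAut (Multiplicative K ⋊[addAutSubgroupHom K (Subgroup.closure {mωs, Φ * mωt2})]
        (Subgroup.closure {mωs, Φ * mωt2})),
      (∀ a, ψ a = ⟨Multiplicative.ofAdd (ωt2 * Multiplicative.toAdd a.left), a.right⟩) ∧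
      (∀ a, ∃ y, ψ a = y * a * y⁻¹) ∧
      ¬ ∃ y, ∀ a, ψ a = y * a * y⁻¹ := by
  set q := p ^ n
  set E := Subgroup.closure {mωs, Φ * mωt2}
  have hcard : Fintype.card K = q ^ t := by rw [hK, pow_mul]
  have hq : 1 < q := (Nat.one_lt_pow_iff (by omega)).mp (hcard ▸ Fintype.one_lt_card)
  obtain ⟨hst, hs1⟩ := Nat.pow_sub_one_div_spec hq (by omega) hnmod (hs.trans (by rw [pow_mul]))
  have hcop : s.Coprime t := hs1.gcd_eq.trans (Nat.gcd_one_left t)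
  have hω : ωt2 ^ q = ωt2 := by
    rw [pow_eq_pow_mod q hωt2.pow_eq_one, hnmod, ← pow_eq_pow_mod 1 hωt2.pow_eq_one, pow_one]
  have hF : ∀ v, (Φ * mωt2) v = ωt2 * v ^ q := fun v => by
    rw [AddAut.mul_apply', hΦ, hmωt2, mul_pow, hω]
  have hE : ∀ f ∈ E, ∃ (μ : K) (c : ℕ), (∀ v, f v = μ * v ^ q ^ c) ∧
      μ ^ (s * t) = ωt2 ^ (c * (s * t)) := fun f hf => by
    refine AddAut.exists_mul_pow_of_mem_closure hω ?_ hf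
    rintro g (rfl | rfl)
    · exact ⟨ωs, 0, by simpa using hmωs,
        by rw [zero_mul, pow_zero, pow_mul, hωs.pow_eq_one, one_pow]⟩
    · exact ⟨ωt2, 1, by simpa using hF, by rw [one_mul]⟩
  obtain ⟨ψ, hψ, hcp, hinner⟩ := exists_twist_classPreserving_not_inner (α := mωt2)
    (fun g hg => AddEquiv.ext fun v => by
      obtain ⟨μ, c, hμ, -⟩ := hE g hg
      rw [AddAut.mul_apply', AddAut.mul_apply', hmωt2, hmωt2,
        AddAut.apply_mul_of_pow_eq_self hμ hω])
    (fun e he x => by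
      simpa only [hmωt2] using AddAut.exists_commute_add_sub_eq_mul hω
        (fun e he => (hE e he).imp fun μ => Exists.imp fun c => And.left)
        (fun a ha => exists_mem_closure_apply_eq_mul_div_pow hq hcard hst
          (hωs.mul_of_coprime (hωt2.pow (by positivity) (sq t)) hcop) hω hmωs hF ha) he x)
    (fun hmem => by
      obtain ⟨μ, c, hμ, hinv⟩ := hE _ hmem
      exact AddAut.not_forall_apply_eq_mul hq ht hcard hωt2 hcop hμ hinv hmωt2)
  exact ⟨ψ, fun a => by rw [hψ, hmωt2], hcp, hinner⟩

/-- With the notation of the paper: `p` prime, `t > 1` coprime to `p`, `n` the multiplicative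
order of `p` mod `t²`, `s := (p^(nt) − 1)/(t(p^n − 1))`, `K` the finite field with `p^(nt)`
elements, `ωs, ωt2 ∈ K` primitive `s`-th and `t²`-th roots of unity, `mωs`, `mωt2` the
additive automorphisms of `K` given by multiplication by `ωs`, `ωt2`, `Φ` the additive
automorphism `x ↦ x^(p^n)`, `E` the subgroup of `AddAut K` generated by `mωs` and
`Φ ∘ mωt2`, and `G := K ⋊ E`.  The map `ψ_G : G → G`, `(x, e) ↦ (ωt2 · x, e)`, is a
well-defined group automorphism of `G` which is class-preserving (it maps every element of
`G` to a conjugate of itself) but is not an inner automorphism of `G`; in particular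
`Out_c(G)` is non-trivial. -/
theorem stmt0 (p t n s : ℕ) (hp : p.Prime) (ht : 1 < t) (htp : Nat.Coprime t p)
    (hn : 0 < n) (hnmod : p ^ n ≡ 1 [MOD t ^ 2])
    (hnmin : ∀ m : ℕ, 0 < m → p ^ m ≡ 1 [MOD t ^ 2] → n ≤ m)
    (hs : s = (p ^ (n * t) - 1) / (t * (p ^ n - 1)))
    (K : Type) [Field K] [Fintype K] (hK : Fintype.card K = p ^ (n * t))
    (ωs ωt2 : K) (hωs : IsPrimitiveRoot ωs s) (hωt2 : IsPrimitiveRoot ωt2 (t ^ 2))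
    (mωs mωt2 Φ : AddAut K)
    (hmωs : ∀ x : K, mωs x = ωs * x) (hmωt2 : ∀ x : K, mωt2 x = ωt2 * x)
    (hΦ : ∀ x : K, Φ x = x ^ (p ^ n)) :
    ∃ ψ : MulAut (Multiplicative K ⋊[addAutSubgroupHom K (Subgroup.closure {mωs, Φ * mωt2})]
        (Subgroup.closure {mωs, Φ * mωt2})),
      (∀ a, ψ a = ⟨Multiplicative.ofAdd (ωt2 * Multiplicative.toAdd a.left), a.right⟩) ∧
      (∀ a, ∃ y, ψ a = y * a * y⁻¹) ∧
      ¬ ∃ y, ∀ a, ψ a = y * a * y⁻¹ :=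
  stmt0_general p t n s ht hnmod hs K hK ωs ωt2 hωs hωt2 mωs mωt2 Φ hmωs hmωt2 hΦ
end

section
/- Let p be a prime, t > 1 an integer coprime to p, and n a positive integer such that p^n ≡ 1 (mod t²). Then t·(p^n − 1) divides p^{nt} − 1, and the integer s := (p^{nt} − 1)/(t·(p^n − 1)) satisfies s ≡ 1 (mod t); in particular s is coprime to t and coprime to p. -/
/-! Put `q = p ^ n`, so that `p ^ (n * t) - 1 = (q - 1) * (1 + q + ⋯ + q ^ (t - 1))`. Since
`q ≡ 1 (mod t²)`, the geometric sum is `≡ t (mod t²)`, hence equals `t * s` with `s ≡ 1 (mod t)`.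
Then `s` is a unit mod `t`, and `s` divides `q ^ t - 1`, which is coprime to `p`. -/

namespace Nat

theorem geom_sum_modEq_of_modEq_one {q m : ℕ} (hq : q ≡ 1 [MOD m]) (k : ℕ) :
    ∑ i ∈ Finset.range k, q ^ i ≡ k [MOD m] := by
  simpa using ModEq.sum (s := Finset.range k) fun i _ => hq.pow i

theorem dvd_and_div_modEq_one_of_modEq_sq {a t : ℕ} (ht : t ≠ 0) (h : a ≡ t [MOD t ^ 2]) :
    t ∣ a ∧ a / t ≡ 1 [MOD t] := by
  rw [sq] at h
  obtain ⟨s, rfl⟩ : t ∣ a :=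
    modEq_zero_iff_dvd.1 ((h.of_mul_right t).trans (modEq_zero_iff_dvd.2 dvd_rfl))
  refine ⟨dvd_mul_right t s, ?_⟩
  rw [Nat.mul_div_cancel_left s (pos_of_ne_zero ht)]
  exact ModEq.mul_left_cancel' ht (by rwa [mul_one])

theorem mul_sub_one_dvd_pow_sub_one_and_div_modEq_one {q t : ℕ} (hq : q ≡ 1 [MOD t ^ 2])
    (hq2 : 2 ≤ q) (ht : t ≠ 0) :
    t * (q - 1) ∣ q ^ t - 1 ∧ (q ^ t - 1) / (t * (q - 1)) ≡ 1 [MOD t] := by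
  obtain ⟨htS, hs⟩ := dvd_and_div_modEq_one_of_modEq_sq ht (geom_sum_modEq_of_modEq_one hq t)
  rw [geomSum_eq hq2] at htS hs
  rw [mul_comm, ← Nat.div_div_eq_div_mul]
  refine ⟨?_, hs⟩
  rw [← Nat.mul_div_cancel' (sub_one_dvd_pow_sub_one q t)]
  exact mul_dvd_mul_left (q - 1) htS

theorem coprime_of_dvd_sub_one_of_dvd {d p N : ℕ} (hN : N ≠ 0) (hd : d ∣ N - 1) (hp : p ∣ N) :
    d.Coprime p :=
  (((coprime_self_sub_left (one_le_iff_ne_zero.2 hN)).2 (coprime_one_left N)).coprime_dvd_left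
    hd).coprime_dvd_right hp

end Nat

theorem stmt1_general (p t n : ℕ) (hp : p.Prime) (ht : 1 < t)
    (hn : 0 < n) (hmod : p ^ n ≡ 1 [MOD t ^ 2]) :
    t * (p ^ n - 1) ∣ p ^ (n * t) - 1 ∧
    (p ^ (n * t) - 1) / (t * (p ^ n - 1)) ≡ 1 [MOD t] ∧
    Nat.Coprime ((p ^ (n * t) - 1) / (t * (p ^ n - 1))) t ∧
    Nat.Coprime ((p ^ (n * t) - 1) / (t * (p ^ n - 1))) p := by
  have hq : 2 ≤ p ^ n := hp.two_le.trans (Nat.le_self_pow hn.ne' p)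
  rw [pow_mul]
  obtain ⟨hdvd, hs⟩ :=
    Nat.mul_sub_one_dvd_pow_sub_one_and_div_modEq_one hmod hq (by positivity)
  have hpN : p ∣ (p ^ n) ^ t := dvd_pow (dvd_pow_self p hn.ne') (by positivity)
  exact ⟨hdvd, hs, Nat.coprime_of_mul_modEq_one 1 (by rwa [mul_one]),
    Nat.coprime_of_dvd_sub_one_of_dvd (by positivity) (Nat.div_dvd_of_dvd hdvd) hpN⟩

/-- Let `p` be a prime, `t > 1` an integer coprime to `p`, and `n` a positive integer
such that `p ^ n ≡ 1 (mod t²)`.  Then `t * (p ^ n − 1)` divides `p ^ (n * t) − 1`, and the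
integer `s := (p ^ (n * t) − 1) / (t * (p ^ n − 1))` satisfies `s ≡ 1 (mod t)`; in
particular `s` is coprime to `t` and coprime to `p`. -/
theorem stmt1 (p t n : ℕ) (hp : p.Prime) (ht : 1 < t) (htp : Nat.Coprime t p)
    (hn : 0 < n) (hmod : p ^ n ≡ 1 [MOD t ^ 2]) :
    t * (p ^ n - 1) ∣ p ^ (n * t) - 1 ∧
    (p ^ (n * t) - 1) / (t * (p ^ n - 1)) ≡ 1 [MOD t] ∧
    Nat.Coprime ((p ^ (n * t) - 1) / (t * (p ^ n - 1))) t ∧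
    Nat.Coprime ((p ^ (n * t) - 1) / (t * (p ^ n - 1))) p :=
  stmt1_general p t n hp ht hn hmod
end

section
/- With the notation of the context, for every nonzero x ∈ K there exist unique integers i and j with 0 ≤ i < s and 0 ≤ j < t such that ω_s^i · ω_{t²}^{1+jt} · x^{p^{n(1+jt)}} = ω_{t²} · x. -/
/-!
Write `p ^ n = 1 + a`, so that `t ^ 2 ∣ a` and `s * (t * a) = (1 + a) ^ t - 1 = #Kˣ`. The
congruence `(1 + a) ^ m ≡ 1 + m * a [MOD a ^ 2]` gives `s ≡ 1 [MOD t]` and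
`x ^ (s * ((1 + a) ^ (1 + j * t) - 1)) = x ^ (s * a)` for `x ≠ 0`.

Dividing by `ωt2 * x`, the equation reads `ωs ^ i * y j = 1` with
`y j = ωt2 ^ (j * t) * x ^ ((1 + a) ^ (1 + j * t) - 1)`, and `y j ^ s = v ^ j * x ^ (s * a)` where
`v = ωt2 ^ (s * t)` is a primitive `t`-th root of unity because `s` is prime to `t`. Since
`x ^ (s * a)` is a `t`-th root of unity, exactly one `j < t` makes `y j` an `s`-th root of unity,
and for that `j` exactly one `i < s` has `ωs ^ i = (y j)⁻¹`.
-/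

namespace Nat

theorem one_add_pow_sub_one_modEq (a m : ℕ) : (1 + a) ^ m - 1 ≡ m * a [MOD a ^ 2] := by
  have hle : 1 ≤ (1 + a) ^ m := one_le_pow _ _ (by omega)
  rw [modEq_iff_dvd, cast_sub hle]
  push_cast
  have hexpand :
      (m * a : ℤ) - ((1 + a) ^ m - 1) = -((1 + a) ^ m - 1 ^ (m - 1) * a * m - 1 ^ m) := by
    ring
  rw [hexpand]
  exact (sq_dvd_add_pow_sub_sub (a : ℤ) 1 m).neg_right

variable {a t s : ℕ}

theorem modEq_one_of_mul_eq_one_add_pow_sub_one (ht : t ≠ 0) (ha : a ≠ 0) (hta : t ^ 2 ∣ a)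
    (hs : s * (t * a) = (1 + a) ^ t - 1) : s ≡ 1 [MOD t] := by
  refine ModEq.mul_right_cancel' (c := t * a) (by positivity) ?_
  rw [hs, one_mul]
  refine (one_add_pow_sub_one_modEq a t).of_dvd ?_
  rw [sq, ← mul_assoc, ← sq]
  exact mul_dvd_mul_right hta a

theorem mul_dvd_one_add_pow_sub_one (hta : t ∣ a) : t * a ∣ (1 + a) ^ t - 1 := by
  refine modEq_zero_iff_dvd.mp ?_
  calc (1 + a) ^ t - 1 ≡ t * a [MOD t * a] :=
        (one_add_pow_sub_one_modEq a t).of_dvd (by rw [sq]; exact mul_dvd_mul_right hta a)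
    _ ≡ 0 [MOD t * a] := modEq_zero_iff_dvd.mpr dvd_rfl

theorem mul_one_add_pow_sub_one_modEq (hta : t ∣ a) (hs : s * (t * a) = (1 + a) ^ t - 1)
    (j : ℕ) : s * ((1 + a) ^ (1 + j * t) - 1) ≡ s * a [MOD (1 + a) ^ t - 1] := by
  rw [← hs]
  refine ModEq.mul_left' s ?_
  calc (1 + a) ^ (1 + j * t) - 1 ≡ (1 + j * t) * a [MOD t * a] :=
        (one_add_pow_sub_one_modEq a _).of_dvd (by rw [sq]; exact mul_dvd_mul_right hta a)
    _ = a + j * (t * a) := by ring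
    _ ≡ a [MOD t * a] := add_mul_mod_self_right a j (t * a)

end Nat

theorem mul_pow_one_add_pow_sub_one_pow_eq {M : Type*} [CommMonoid M] {a t s : ℕ} (hta : t ∣ a)
    (hs : s * (t * a) = (1 + a) ^ t - 1) {x : M} (hx : x ^ ((1 + a) ^ t - 1) = 1) (ζ : M)
    (j : ℕ) :
    (ζ ^ (j * t) * x ^ ((1 + a) ^ (1 + j * t) - 1)) ^ s = (ζ ^ (s * t)) ^ j * x ^ (s * a) := by
  rw [mul_pow, ← pow_mul, ← pow_mul, mul_comm ((1 + a) ^ (1 + j * t) - 1) s,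
    pow_eq_pow_of_modEq (Nat.mul_one_add_pow_sub_one_modEq hta hs j) hx, ← pow_mul,
    show j * t * s = s * t * j by ring]

section IsDomain

variable {R : Type*} [CommRing R] [IsDomain R]

theorem mul_mul_pow_one_add_eq_mul_iff {α ζ x : R} (hζ : ζ ≠ 0) (hx : x ≠ 0) {c : ℕ}
    (hc : c ≠ 0) (l : ℕ) :
    α * ζ ^ (1 + l) * x ^ c = ζ * x ↔ α * (ζ ^ l * x ^ (c - 1)) = 1 := by
  have hfactor : α * ζ ^ (1 + l) * x ^ c = α * (ζ ^ l * x ^ (c - 1)) * (ζ * x) := by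
    rw [← pow_sub_one_mul hc, pow_add]
    ring
  rw [hfactor, mul_eq_right₀ (mul_ne_zero hζ hx)]

namespace IsPrimitiveRoot

variable {ζ : R} {k : ℕ} [NeZero k]

theorem existsUnique_pow_mul_eq_one (hζ : IsPrimitiveRoot ζ k) {w : R} (hw : w ^ k = 1) :
    ∃! i, i < k ∧ ζ ^ i * w = 1 := by
  obtain ⟨i, hik, hi⟩ := hζ.eq_pow_of_pow_eq_one (ξ := w ^ (k - 1))
    (by rw [← pow_mul, mul_comm, pow_mul, hw, one_pow])
  have hiw : ζ ^ i * w = 1 := by rw [hi, pow_sub_one_mul (NeZero.ne k), hw]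
  have hw0 : w ≠ 0 := by
    rintro rfl
    simp [NeZero.ne k] at hw
  exact ⟨i, ⟨hik, hiw⟩, fun j ⟨hjk, hj⟩ ↦
    hζ.pow_inj hjk hik (mul_right_cancel₀ hw0 (hj.trans hiw.symm))⟩

theorem existsUnique_prod_pow_mul_eq_one (hζ : IsPrimitiveRoot ζ k) {y : ℕ → R} {t : ℕ}
    (hy : ∃! j, j < t ∧ y j ^ k = 1) :
    ∃! ij : ℕ × ℕ, ij.1 < k ∧ ij.2 < t ∧ ζ ^ ij.1 * y ij.2 = 1 := by
  obtain ⟨j, ⟨hjt, hj⟩, hj_unique⟩ := hy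
  obtain ⟨i, ⟨hik, hi⟩, hi_unique⟩ := hζ.existsUnique_pow_mul_eq_one hj
  refine ⟨(i, j), ⟨hik, hjt, hi⟩, ?_⟩
  rintro ⟨i', j'⟩ ⟨hi'k, hj't, h⟩
  have hj' : y j' ^ k = 1 := by
    have hζk : (ζ ^ i') ^ k = 1 := by rw [← pow_mul, mul_comm, pow_mul, hζ.pow_eq_one, one_pow]
    simpa [mul_pow, hζk] using congr_arg (· ^ k) h
  obtain rfl := hj_unique j' ⟨hj't, hj'⟩
  obtain rfl := hi_unique i' ⟨hi'k, h⟩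
  rfl

end IsPrimitiveRoot

end IsDomain

theorem stmt2_general (p t n s : ℕ) (hp : p.Prime) (ht : 1 < t)
    (hn : 0 < n) (hnmod : p ^ n ≡ 1 [MOD t ^ 2])
    (hs : s = (p ^ (n * t) - 1) / (t * (p ^ n - 1)))
    (K : Type) [Field K] [Fintype K] (hK : Fintype.card K = p ^ (n * t))
    (ωs ωt2 : K) (hωs : IsPrimitiveRoot ωs s) (hωt2 : IsPrimitiveRoot ωt2 (t ^ 2)) :
    ∀ x : K, x ≠ 0 →
      ∃! ij : ℕ × ℕ, ij.1 < s ∧ ij.2 < t ∧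
        ωs ^ ij.1 * ωt2 ^ (1 + ij.2 * t) * x ^ (p ^ (n * (1 + ij.2 * t))) = ωt2 * x := by
  intro x hx
  have hpn : 1 < p ^ n := Nat.one_lt_pow hn.ne' hp.one_lt
  obtain ⟨a, hpa⟩ : ∃ a, p ^ n = 1 + a := ⟨p ^ n - 1, by omega⟩
  have ha : a ≠ 0 := by omega
  have hta2 : t ^ 2 ∣ a := by simpa [hpa] using (Nat.modEq_iff_dvd' hpn.le).mp hnmod.symm
  have hta : t ∣ a := (dvd_pow_self t two_ne_zero).trans hta2
  have hsa : s * (t * a) = (1 + a) ^ t - 1 := by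
    rw [hs, pow_mul, hpa, Nat.add_sub_cancel_left]
    exact Nat.div_mul_cancel (Nat.mul_dvd_one_add_pow_sub_one hta)
  have hxN : x ^ ((1 + a) ^ t - 1) = 1 := by
    simpa [hK, pow_mul, hpa] using FiniteField.pow_card_sub_one_eq_one x hx
  have : NeZero t := ⟨by omega⟩
  have hst : s.Coprime t := Nat.coprime_of_mul_modEq_one 1
    (by simpa using Nat.modEq_one_of_mul_eq_one_add_pow_sub_one (NeZero.ne t) ha hta2 hsa)
  have : NeZero s := ⟨by rintro rfl; have := (Nat.coprime_zero_left t).mp hst; omega⟩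
  have hv : IsPrimitiveRoot (ωt2 ^ (s * t)) t := by
    rw [pow_mul]
    exact (hωt2.pow_of_coprime s (hst.pow_right 2)).pow (by positivity) (sq t)
  have hw : (x ^ (s * a)) ^ t = 1 := by rw [← pow_mul, mul_assoc, mul_comm a, hsa, hxN]
  have hE : ∀ i j, ωs ^ i * ωt2 ^ (1 + j * t) * x ^ (p ^ (n * (1 + j * t))) = ωt2 * x ↔
      ωs ^ i * (ωt2 ^ (j * t) * x ^ ((1 + a) ^ (1 + j * t) - 1)) = 1 := fun i j ↦ by
    rw [pow_mul p n, hpa]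
    exact mul_mul_pow_one_add_eq_mul_iff (hωt2.ne_zero (by positivity)) hx
      (pow_ne_zero _ (by omega)) _
  simp only [hE]
  refine hωs.existsUnique_prod_pow_mul_eq_one
    (y := fun j ↦ ωt2 ^ (j * t) * x ^ ((1 + a) ^ (1 + j * t) - 1)) ?_
  simpa only [mul_pow_one_add_pow_sub_one_pow_eq hta hsa hxN] using
    hv.existsUnique_pow_mul_eq_one hw

/-- Let `p` be a prime, `t > 1` coprime to `p`, `n` the multiplicative order of `p` mod `t²`,
`s := (p^(nt) − 1)/(t(p^n − 1))`, `K` the finite field with `p^(nt)` elements, and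
`ωs, ωt2 ∈ K` primitive `s`-th and `t²`-th roots of unity respectively.  Then for every
nonzero `x ∈ K` there exist unique integers `i, j` with `0 ≤ i < s` and `0 ≤ j < t` such
that `ωs^i · ωt2^(1+jt) · x^(p^(n(1+jt))) = ωt2 · x`. -/
theorem stmt2 (p t n s : ℕ) (hp : p.Prime) (ht : 1 < t) (htp : Nat.Coprime t p)
    (hn : 0 < n) (hnmod : p ^ n ≡ 1 [MOD t ^ 2])
    (hnmin : ∀ m : ℕ, 0 < m → p ^ m ≡ 1 [MOD t ^ 2] → n ≤ m)
    (hs : s = (p ^ (n * t) - 1) / (t * (p ^ n - 1)))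
    (K : Type) [Field K] [Fintype K] (hK : Fintype.card K = p ^ (n * t))
    (ωs ωt2 : K) (hωs : IsPrimitiveRoot ωs s) (hωt2 : IsPrimitiveRoot ωt2 (t ^ 2)) :
    ∀ x : K, x ≠ 0 →
      ∃! ij : ℕ × ℕ, ij.1 < s ∧ ij.2 < t ∧
        ωs ^ ij.1 * ωt2 ^ (1 + ij.2 * t) * x ^ (p ^ (n * (1 + ij.2 * t))) = ωt2 * x :=
  stmt2_general p t n s hp ht hn hnmod hs K hK ωs ωt2 hωs hωt2
end

section
/- With the notation of the context, the subgroup E of additive automorphisms of K acts fixed-point-freely on K: for every e ∈ E with e ≠ id and every x ∈ K with x ≠ 0, one has e(x) ≠ x. -/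
/-!
Every element of `E` has the form `x ↦ ωs ^ i * ωt2 ^ c * x ^ (q ^ k)` with `q = p ^ n` and
`c ≡ k [MOD t]`; this congruence survives composition because `q ≡ 1 [MOD t]`. Suppose such a
map fixes `x ≠ 0`, and let `d = gcd k t`. Raising `λ = ωs ^ i * ωt2 ^ c = x ^ (1 - q ^ k)` to the
power `S = (q ^ t - 1) / (q ^ d - 1)` gives `1`, because `q ^ d - 1 ∣ q ^ k - 1`. Since `s` is
prime to `t` (it is `≡ 1 [MOD t]`) and `S ≡ t / d [MOD t ^ 2]`, this forces `t ∣ c`, hence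
`t ∣ k`. Then `x ↦ x ^ (q ^ k)` is the identity of `K`, so the map is multiplication by `λ`, and
the fixed point gives `λ = 1`.
-/

open Finset

theorem Nat.geomSum_modEq_of_modEq_one {a m : ℕ} (ha : a ≡ 1 [MOD m]) (n : ℕ) :
    ∑ j ∈ range n, a ^ j ≡ n [MOD m] := by
  rw [← ZMod.natCast_eq_natCast_iff] at ha ⊢
  push_cast
  simp [ha]

theorem Nat.coprime_geomSum_div {q t : ℕ} (ht : 0 < t) (hq1 : 1 < q) (hq : q ≡ 1 [MOD t ^ 2]) :
    Nat.Coprime ((q ^ t - 1) / (t * (q - 1))) t := by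
  have hG := Nat.geomSum_modEq_of_modEq_one hq t
  obtain ⟨g, hg⟩ : t ∣ ∑ j ∈ range t, q ^ j :=
    (hG.dvd_iff (dvd_pow_self t two_ne_zero)).2 dvd_rfl
  have hg1 : g ≡ 1 [MOD t] :=
    Nat.ModEq.mul_left_cancel' ht.ne' (by rwa [mul_one, ← sq, ← hg])
  have hquot : (q ^ t - 1) / (t * (q - 1)) = g := by
    rw [← geom_sum_mul_of_one_le hq1.le, hg, mul_right_comm,
      Nat.mul_div_cancel_left _ (Nat.mul_pos ht (Nat.sub_pos_of_lt hq1))]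
  rw [hquot, Nat.Coprime, hg1.gcd_eq, Nat.gcd_one_left]

theorem Nat.dvd_of_sq_dvd_mul_geomSum {q t d c : ℕ} (ht : 0 < t) (hq : q ≡ 1 [MOD t ^ 2])
    (hdt : d ∣ t) (h : t ^ 2 ∣ c * ∑ j ∈ range (t / d), (q ^ d) ^ j) : d * t ∣ c := by
  obtain ⟨M, rfl⟩ := hdt
  have hd : 0 < d := Nat.pos_of_mul_pos_right ht
  have hM : 0 < M := Nat.pos_of_mul_pos_left ht
  rw [Nat.mul_div_cancel_left M hd] at h
  have hS := Nat.geomSum_modEq_of_modEq_one (by simpa using hq.pow d) M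
  have hcM : d * (d * M) * M ∣ c * M := by
    rw [show d * (d * M) * M = (d * M) ^ 2 by ring]
    exact ((hS.mul_left c).dvd_iff dvd_rfl).1 h
  exact Nat.dvd_of_mul_dvd_mul_right hM hcM

variable {K : Type*} [Field K]

theorem pow_geomSum_eq_one_of_mul_pow_pow_eq_self [Fintype K] {q t d k : ℕ}
    (hcard : Fintype.card K = q ^ t) (hdt : d ∣ t) (hdk : d ∣ k) {c x : K} (hx : x ≠ 0)
    (h : c * x ^ q ^ k = x) : c ^ ∑ j ∈ range (t / d), (q ^ d) ^ j = 1 := by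
  set S := ∑ j ∈ range (t / d), (q ^ d) ^ j
  have hq : 0 < q := by
    refine Nat.pos_of_ne_zero fun hq0 => ?_
    have := Fintype.one_lt_card (α := K)
    rw [hcard, hq0] at this
    rcases t with _ | _ <;> simp at this
  have hS : q ^ t - 1 ∣ (q ^ k - 1) * S := by
    have hgeom : S * (q ^ d - 1) = q ^ t - 1 := by
      rw [geom_sum_mul_of_one_le (Nat.one_le_pow _ _ hq), ← pow_mul, Nat.mul_div_cancel' hdt]
    rw [← hgeom, mul_comm S]
    exact mul_dvd_mul_right (Nat.pow_sub_one_dvd_pow_sub_one q hdk) S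
  have hxS : x ^ (q ^ k * S) = x ^ S := by
    obtain ⟨m, hm⟩ := hS
    rw [← Nat.sub_add_cancel (Nat.one_le_pow k q hq), add_mul, pow_add, one_mul, hm, pow_mul,
      ← hcard, FiniteField.pow_card_sub_one_eq_one x hx, one_pow, one_mul]
  have hxS0 : x ^ S ≠ 0 := pow_ne_zero _ hx
  calc c ^ S = c ^ S * x ^ (q ^ k * S) / x ^ S := by rw [hxS, mul_div_cancel_right₀ _ hxS0]
    _ = 1 := by rw [pow_mul, ← mul_pow, h, div_self hxS0]

theorem dvd_of_mul_pow_pow_eq_self [Fintype K] {q t s i c k : ℕ} {a b x : K} (ht : 0 < t)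
    (hcard : Fintype.card K = q ^ t) (hq : q ≡ 1 [MOD t ^ 2]) (ha : a ^ s = 1)
    (hst : s.Coprime t) (hb : IsPrimitiveRoot b (t ^ 2)) (hck : c ≡ k [MOD t]) (hx : x ≠ 0)
    (h : a ^ i * b ^ c * x ^ q ^ k = x) : t ∣ k := by
  set d := k.gcd t
  set S := ∑ j ∈ range (t / d), (q ^ d) ^ j
  have hS : (a ^ i * b ^ c) ^ S = 1 :=
    pow_geomSum_eq_one_of_mul_pow_pow_eq_self hcard (Nat.gcd_dvd_right k t)
      (Nat.gcd_dvd_left k t) hx h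
  have hbc : b ^ (c * S * s) = 1 := by
    have : (a ^ s) ^ (i * S) * b ^ (c * S * s) = ((a ^ i * b ^ c) ^ S) ^ s := by ring
    rwa [ha, hS, one_pow, one_pow, one_mul] at this
  have hcS : t ^ 2 ∣ c * S :=
    (hst.symm.pow_left 2).dvd_of_dvd_mul_right ((hb.pow_eq_one_iff_dvd _).1 hbc)
  have htc : t ∣ c :=
    (Dvd.intro_left d rfl).trans (Nat.dvd_of_sq_dvd_mul_geomSum ht hq (Nat.gcd_dvd_right k t) hcS)
  exact (hck.dvd_iff dvd_rfl).1 htc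

def IsScaledFrobeniusPower (q t : ℕ) (a b : K) (e : AddAut K) : Prop :=
  ∃ i c k : ℕ, c ≡ k [MOD t] ∧ ∀ x, e x = a ^ i * b ^ c * x ^ q ^ k

namespace IsScaledFrobeniusPower

variable {q t : ℕ} {a b : K}

theorem zero : IsScaledFrobeniusPower q t a b 0 :=
  ⟨0, 0, 0, rfl, fun x => by simp⟩

theorem add (hq : q ≡ 1 [MOD t]) {e f : AddAut K} (he : IsScaledFrobeniusPower q t a b e)
    (hf : IsScaledFrobeniusPower q t a b f) : IsScaledFrobeniusPower q t a b (e + f) := by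
  obtain ⟨i₁, c₁, k₁, hck₁, he⟩ := he
  obtain ⟨i₂, c₂, k₂, hck₂, hf⟩ := hf
  refine ⟨i₁ + i₂ * q ^ k₁, c₁ + c₂ * q ^ k₁, k₁ + k₂, ?_, fun x => ?_⟩
  · simpa using hck₁.add (hck₂.mul (hq.pow k₁))
  · rw [AddAut.add_apply, hf, he]
    ring

theorem of_mem_closure [Finite K] (hq : q ≡ 1 [MOD t]) {S : Set (AddAut K)}
    (hS : ∀ e ∈ S, IsScaledFrobeniusPower q t a b e) {e : AddAut K}
    (he : e ∈ AddSubgroup.closure S) : IsScaledFrobeniusPower q t a b e := by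
  rw [← AddSubgroup.mem_toAddSubmonoid, AddSubgroup.closure_toAddSubmonoid_of_finite] at he
  exact AddSubmonoid.closure_induction hS zero (fun _ _ _ _ => add hq) he

theorem eq_zero_of_apply_eq_self [Fintype K] {s : ℕ} (ht : 0 < t)
    (hcard : Fintype.card K = q ^ t) (hq : q ≡ 1 [MOD t ^ 2]) (ha : a ^ s = 1)
    (hst : s.Coprime t) (hb : IsPrimitiveRoot b (t ^ 2)) {e : AddAut K}
    (he : IsScaledFrobeniusPower q t a b e) {x : K} (hx : x ≠ 0) (hfix : e x = x) : e = 0 := by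
  obtain ⟨i, c, k, hck, he⟩ := he
  obtain ⟨m, rfl⟩ : t ∣ k :=
    dvd_of_mul_pow_pow_eq_self ht hcard hq ha hst hb hck hx (he x ▸ hfix)
  have hfrob (y : K) : y ^ q ^ (t * m) = y := by
    rw [pow_mul, ← hcard, FiniteField.pow_card_pow]
  have hscalar : a ^ i * b ^ c = 1 := by simpa [he, hfrob, hx] using hfix
  ext y
  rw [he, hfrob, hscalar, one_mul, AddAut.zero_apply]

end IsScaledFrobeniusPower

theorem stmt3_general (p t n s : ℕ) (hp : p.Prime) (ht : 1 < t)
    (hn : 0 < n) (hnmod : p ^ n ≡ 1 [MOD t ^ 2])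
    (hs : s = (p ^ (n * t) - 1) / (t * (p ^ n - 1)))
    (K : Type) [Field K] [Fintype K] (hK : Fintype.card K = p ^ (n * t))
    (ωs ωt2 : K) (hωs : IsPrimitiveRoot ωs s) (hωt2 : IsPrimitiveRoot ωt2 (t ^ 2))
    (mωs mωt2 Φ : AddAut K)
    (hmωs : ∀ x : K, mωs x = ωs * x) (hmωt2 : ∀ x : K, mωt2 x = ωt2 * x)
    (hΦ : ∀ x : K, Φ x = x ^ (p ^ n)) :
    ∀ e ∈ AddSubgroup.closure {mωs, Φ + mωt2}, e ≠ 0 → ∀ x : K, x ≠ 0 → e x ≠ x := by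
  intro e he hne x hx hfix
  have ht0 : 0 < t := by omega
  have hq1 : 1 < p ^ n := Nat.one_lt_pow hn.ne' hp.one_lt
  have hqt : p ^ n ≡ 1 [MOD t] := hnmod.of_dvd (dvd_pow_self t two_ne_zero)
  have hcard : Fintype.card K = (p ^ n) ^ t := by rw [hK, pow_mul]
  have hst : s.Coprime t := by
    rw [hs, pow_mul]
    exact Nat.coprime_geomSum_div ht0 hq1 hnmod
  have hgen : ∀ f ∈ ({mωs, Φ + mωt2} : Set (AddAut K)),
      IsScaledFrobeniusPower (p ^ n) t ωs ωt2 f := by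
    rintro f (rfl | rfl)
    · exact ⟨1, 0, 0, rfl, fun y => by simp [hmωs]⟩
    · exact ⟨0, p ^ n, 1, hqt, fun y => by simp [AddAut.add_apply, hmωt2, hΦ, mul_pow]⟩
  exact hne ((IsScaledFrobeniusPower.of_mem_closure hqt hgen he).eq_zero_of_apply_eq_self ht0
    hcard hnmod hωs.pow_eq_one hst hωt2 hx hfix)

/-- With the notation of the paper: `p` prime, `t > 1` coprime to `p`, `n` the multiplicative
order of `p` mod `t²`, `s := (p^(nt) − 1)/(t(p^n − 1))`, `K` the finite field with `p^(nt)`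
elements, `ωs, ωt2 ∈ K` primitive `s`-th and `t²`-th roots of unity, `mωs` and `mωt2` the
additive automorphisms of `K` given by multiplication by `ωs` and `ωt2`, and `Φ` the additive
automorphism `x ↦ x^(p^n)`.  The subgroup `E` of the additive automorphism group of `K`
generated by `mωs` and `Φ ∘ mωt2` acts fixed-point-freely on `K`: for every `e ∈ E` with
`e ≠ id` and every `x ∈ K` with `x ≠ 0`, one has `e x ≠ x`. -/
theorem stmt3 (p t n s : ℕ) (hp : p.Prime) (ht : 1 < t) (htp : Nat.Coprime t p)
    (hn : 0 < n) (hnmod : p ^ n ≡ 1 [MOD t ^ 2])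
    (hnmin : ∀ m : ℕ, 0 < m → p ^ m ≡ 1 [MOD t ^ 2] → n ≤ m)
    (hs : s = (p ^ (n * t) - 1) / (t * (p ^ n - 1)))
    (K : Type) [Field K] [Fintype K] (hK : Fintype.card K = p ^ (n * t))
    (ωs ωt2 : K) (hωs : IsPrimitiveRoot ωs s) (hωt2 : IsPrimitiveRoot ωt2 (t ^ 2))
    (mωs mωt2 Φ : AddAut K)
    (hmωs : ∀ x : K, mωs x = ωs * x) (hmωt2 : ∀ x : K, mωt2 x = ωt2 * x)
    (hΦ : ∀ x : K, Φ x = x ^ (p ^ n)) :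
    ∀ e ∈ AddSubgroup.closure {mωs, Φ + mωt2}, e ≠ 0 → ∀ x : K, x ≠ 0 → e x ≠ x :=
  stmt3_general p t n s hp ht hn hnmod hs K hK ωs ωt2 hωs hωt2 mωs mωt2 Φ hmωs hmωt2 hΦ
end

section
/- With the notation of the context, the additive automorphism m_{ω_{t²}} of K (multiplication by ω_{t²}) is not an element of the subgroup E. -/
/-!
Every element of `E` has the form `x ↦ l * x ^ q ^ j` with `q = p ^ n`, and its coefficient
satisfies `l ^ (s * t) = (ω ^ (s * t)) ^ j`, where `ω = ω_{t²}`: multiplication by `ω_s`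
contributes `ω_s ^ (s * t) = 1`, the generator `Φ ∘ m_ω` has coefficient `ω ^ q = ω`
(as `q ≡ 1 mod t²`), and the relation survives composition because `ω ^ q = ω`.
Multiplication by `ω` itself is of this form only with `l = ω` and `x ^ q ^ j = x` on `K`,
which forces `t ∣ j` and hence `ω ^ (s * t) = 1`, i.e. `t ∣ s`. But `s` is the geometric sum
`∑_{i<t} q ^ i` divided by `t`, and that sum is `≡ t mod t²`, so `s ≡ 1 mod t`.
-/

theorem Nat.pow_sub_one_dvd_pow_sub_one_iff {q m k : ℕ} (hq : 1 < q) :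
    q ^ m - 1 ∣ q ^ k - 1 ↔ m ∣ k := by
  refine ⟨fun h => ?_, pow_sub_one_dvd_pow_sub_one q⟩
  have hgcd : q ^ m.gcd k - 1 = q ^ m - 1 := by
    rw [← Nat.pow_sub_one_gcd_pow_sub_one, Nat.gcd_eq_left h]
  have hpow : q ^ m.gcd k = q ^ m := by
    have := Nat.one_le_pow (m.gcd k) q (by omega)
    have := Nat.one_le_pow m q (by omega)
    omega
  rw [← Nat.gcd_eq_left_iff_dvd, Nat.pow_right_injective hq hpow]

theorem Nat.geomSum_modEq_of_modEq_one_s4 {q m : ℕ} (hq : q ≡ 1 [MOD m]) (t : ℕ) :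
    ∑ i ∈ Finset.range t, q ^ i ≡ t [MOD m] := by
  induction t with
  | zero => rfl
  | succ t ih =>
    rw [Finset.sum_range_succ]
    simpa using ih.add (hq.pow t)

theorem Nat.pow_sub_one_div_mul_modEq_one {q t : ℕ} (hq : 1 < q) (hqt : q ≡ 1 [MOD t ^ 2]) :
    (q ^ t - 1) / (t * (q - 1)) ≡ 1 [MOD t] := by
  have ht : t ≠ 0 := by
    rintro rfl
    simp [Nat.modEq_iff_dvd] at hqt
    omega
  have hsum := Nat.geomSum_modEq_of_modEq_one_s4 hqt t
  obtain ⟨u, hu⟩ : t ∣ ∑ i ∈ Finset.range t, q ^ i :=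
    (hsum.dvd_iff (dvd_pow_self t two_ne_zero)).mpr dvd_rfl
  have hdiv : (q ^ t - 1) / (t * (q - 1)) = u := by
    rw [mul_comm, ← Nat.div_div_eq_div_mul, ← Nat.geomSum_eq hq, hu,
      Nat.mul_div_cancel_left u (Nat.pos_of_ne_zero ht)]
  rw [hdiv]
  rw [hu, sq] at hsum
  exact Nat.ModEq.mul_left_cancel' ht (by simpa using hsum)

theorem pow_pow_eq_self {M : Type*} [Monoid M] {η : M} {q : ℕ} (hη : η ^ q = η) (j : ℕ) :
    η ^ q ^ j = η := by
  induction j with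
  | zero => simp
  | succ j ih => rw [pow_succ, pow_mul, ih, hη]

theorem FiniteField.dvd_of_forall_pow_pow_eq_self {K : Type*} [Field K] [Fintype K]
    {q t j : ℕ} (hq : 1 < q) (hK : Fintype.card K = q ^ t) (h : ∀ x : K, x ^ q ^ j = x) :
    t ∣ j := by
  rw [← Nat.pow_sub_one_dvd_pow_sub_one_iff hq, ← hK, ← FiniteField.forall_pow_eq_one_iff]
  intro x
  have hx : x ^ q ^ j = x := Units.ext (by simpa using h x)
  rw [pow_sub x (Nat.one_le_pow _ _ (by omega)), hx, pow_one, mul_inv_cancel]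

section TwistedFrobenius

variable {K : Type*} [Field K]

def twistedFrobeniusSubmonoid (q c : ℕ) {η : K} (hη : η ^ q = η) :
    AddSubmonoid (AddAut K) where
  carrier := {φ | ∃ (j : ℕ) (l : K), (∀ x, φ x = l * x ^ q ^ j) ∧ l ^ c = η ^ j}
  zero_mem' := ⟨0, 1, by simp⟩
  add_mem' := by
    rintro f g ⟨j₁, l₁, hf, hl₁⟩ ⟨j₂, l₂, hg, hl₂⟩
    refine ⟨j₁ + j₂, l₁ * l₂ ^ q ^ j₁, fun x => ?_, ?_⟩
    · rw [AddAut.add_apply, hg, hf]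
      ring
    · rw [mul_pow, hl₁, ← pow_mul, mul_comm (q ^ j₁) c, pow_mul, hl₂, ← pow_mul,
        mul_comm j₂, pow_mul, pow_pow_eq_self hη, pow_add]

theorem pow_eq_one_of_mulLeft_mem_twistedFrobeniusSubmonoid [Fintype K] {q t c : ℕ}
    {η ω : K} (hq : 1 < q) (hK : Fintype.card K = q ^ t) (hη : η ^ q = η) (hηt : η ^ t = 1)
    (hω : ω ≠ 0) {φ : AddAut K} (hφ : ∀ x, φ x = ω * x)
    (hmem : φ ∈ twistedFrobeniusSubmonoid q c hη) :
    ω ^ c = 1 := by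
  obtain ⟨j, l, hφl, hl⟩ := hmem
  have hlω : l = ω := by simpa [hφ] using (hφl 1).symm
  subst hlω
  obtain ⟨i, rfl⟩ : t ∣ j := FiniteField.dvd_of_forall_pow_pow_eq_self hq hK fun x =>
    (mul_left_cancel₀ hω ((hφ x).symm.trans (hφl x))).symm
  rw [hl, pow_mul, hηt, one_pow]

end TwistedFrobenius

theorem stmt4_general (p t n s : ℕ) (hp : p.Prime) (ht : 1 < t)
    (hn : 0 < n) (hnmod : p ^ n ≡ 1 [MOD t ^ 2])
    (hs : s = (p ^ (n * t) - 1) / (t * (p ^ n - 1)))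
    (K : Type) [Field K] [Fintype K] (hK : Fintype.card K = p ^ (n * t))
    (ωs ωt2 : K) (hωs : IsPrimitiveRoot ωs s) (hωt2 : IsPrimitiveRoot ωt2 (t ^ 2))
    (mωs mωt2 Φ : AddAut K)
    (hmωs : ∀ x : K, mωs x = ωs * x) (hmωt2 : ∀ x : K, mωt2 x = ωt2 * x)
    (hΦ : ∀ x : K, Φ x = x ^ (p ^ n)) :
    mωt2 ∉ AddSubgroup.closure {mωs, Φ + mωt2} := by
  intro hmem
  have hq : 1 < p ^ n := Nat.one_lt_pow hn.ne' hp.one_lt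
  have hωq : ωt2 ^ p ^ n = ωt2 := by simpa using pow_eq_pow_of_modEq hnmod hωt2.pow_eq_one
  have hηq : (ωt2 ^ (s * t)) ^ p ^ n = ωt2 ^ (s * t) := by
    rw [← pow_mul, mul_comm, pow_mul, hωq]
  have hE : (AddSubgroup.closure {mωs, Φ + mωt2}).toAddSubmonoid ≤
      twistedFrobeniusSubmonoid (p ^ n) (s * t) hηq := by
    rw [AddSubgroup.closure_toAddSubmonoid_of_finite, AddSubmonoid.closure_le,
      Set.insert_subset_iff, Set.singleton_subset_iff]
    refine ⟨⟨0, ωs, by simp [hmωs], by simp [pow_mul, hωs.pow_eq_one]⟩,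
      ⟨1, ωt2 ^ p ^ n, fun x => ?_, by rw [hωq, pow_one]⟩⟩
    rw [AddAut.add_apply, hmωt2, hΦ, mul_pow, pow_one]
  have hηt : (ωt2 ^ (s * t)) ^ t = 1 := by
    rw [← pow_mul, hωt2.pow_eq_one_iff_dvd]
    exact ⟨s, by ring⟩
  have hst : t * t ∣ s * t := by
    rw [← sq, ← hωt2.pow_eq_one_iff_dvd]
    exact pow_eq_one_of_mulLeft_mem_twistedFrobeniusSubmonoid hq (by rwa [← pow_mul]) hηq hηt
      (hωt2.ne_zero (by positivity)) hmωt2 (hE hmem)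
  have hts : t ∣ s := Nat.dvd_of_mul_dvd_mul_right (by omega) hst
  rw [hs, pow_mul] at hts
  have hs1 : t ∣ 1 := ((Nat.pow_sub_one_div_mul_modEq_one hq hnmod).dvd_iff dvd_rfl).mp hts
  exact absurd (Nat.le_of_dvd one_pos hs1) (by omega)

/-- With the notation of the paper: `p` prime, `t > 1` coprime to `p`, `n` the multiplicative
order of `p` mod `t²`, `s := (p^(nt) − 1)/(t(p^n − 1))`, `K` the finite field with `p^(nt)`
elements, `ωs, ωt2 ∈ K` primitive `s`-th and `t²`-th roots of unity, `mωs` and `mωt2` the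
additive automorphisms of `K` given by multiplication by `ωs` and `ωt2`, and `Φ` the additive
automorphism `x ↦ x^(p^n)`.  Then the additive automorphism `mωt2` (multiplication by `ωt2`)
is not an element of the subgroup `E` generated by `mωs` and `Φ ∘ mωt2`. -/
theorem stmt4 (p t n s : ℕ) (hp : p.Prime) (ht : 1 < t) (htp : Nat.Coprime t p)
    (hn : 0 < n) (hnmod : p ^ n ≡ 1 [MOD t ^ 2])
    (hnmin : ∀ m : ℕ, 0 < m → p ^ m ≡ 1 [MOD t ^ 2] → n ≤ m)
    (hs : s = (p ^ (n * t) - 1) / (t * (p ^ n - 1)))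
    (K : Type) [Field K] [Fintype K] (hK : Fintype.card K = p ^ (n * t))
    (ωs ωt2 : K) (hωs : IsPrimitiveRoot ωs s) (hωt2 : IsPrimitiveRoot ωt2 (t ^ 2))
    (mωs mωt2 Φ : AddAut K)
    (hmωs : ∀ x : K, mωs x = ωs * x) (hmωt2 : ∀ x : K, mωt2 x = ωt2 * x)
    (hΦ : ∀ x : K, Φ x = x ^ (p ^ n)) :
    mωt2 ∉ AddSubgroup.closure {mωs, Φ + mωt2} :=
  stmt4_general p t n s hp ht hn hnmod hs K hK ωs ωt2 hωs hωt2 mωs mωt2 Φ hmωs hmωt2 hΦ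
end

section
/- Let P be a finite abelian p-group and H an abelian subgroup of Aut(P) whose order is coprime to p. Then P is the internal direct product of C_P(H) and [H,P]: these two subgroups intersect trivially and together generate P. -/
/-- For a subgroup `H` of the automorphism group of `P`, the subgroup
`C_P(H) = {x ∈ P : h(x) = x for all h ∈ H}` of fixed points. -/
def fixedSubgroup {P : Type*} [Group P] (H : Subgroup (MulAut P)) : Subgroup P where
  carrier := {x : P | ∀ h ∈ H, h x = x}
  one_mem' := by intro h _; simp
  mul_mem' := by
    intro a b ha hb h hh
    rw [map_mul, ha h hh, hb h hh]
  inv_mem' := by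
    intro a ha h hh
    rw [map_inv, ha h hh]

/-- For a subgroup `H` of the automorphism group of `P`, the subgroup `[H, P]` of `P`
generated by the elements `h(x) * x⁻¹` for `h ∈ H`, `x ∈ P`. -/
def commSubgroup {P : Type*} [Group P] (H : Subgroup (MulAut P)) : Subgroup P :=
  Subgroup.closure {y : P | ∃ h ∈ H, ∃ x : P, y = h x * x⁻¹}

/-- Let `P` be a finite abelian `p`-group and `H` an abelian subgroup of `Aut(P)` whose
order is coprime to `p`.  Then `P` is the internal direct product of `C_P(H)` and `[H, P]`:
these two subgroups intersect trivially and together generate `P`. -/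
theorem stmt5 (p : ℕ) (hp : p.Prime) (P : Type) [CommGroup P] [Finite P]
    (hP : IsPGroup p P) (H : Subgroup (MulAut P))
    (hab : ∀ a ∈ H, ∀ b ∈ H, a * b = b * a)
    (hcop : Nat.Coprime (Nat.card H) p) :
    fixedSubgroup H ⊓ commSubgroup H = ⊥ ∧ fixedSubgroup H ⊔ commSubgroup H = ⊤ := by
  classical
  haveI := Fact.mk hp
  haveI : Fintype H := Fintype.ofFinite H
  set n := Nat.card H with hn
  have hncard : n = Fintype.card H := Nat.card_eq_fintype_card
  -- the averaging homomorphism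
  let T : P →* P :=
    { toFun := fun x => ∏ h : H, (h : MulAut P) x
      map_one' := by simp
      map_mul' := by
        intro a b
        simp [map_mul, Finset.prod_mul_distrib] }
  have hT : ∀ x : P, T x = ∏ h : H, (h : MulAut P) x := fun _ => rfl
  -- T x is fixed by H
  have hTfix : ∀ x : P, T x ∈ fixedSubgroup H := by
    intro x k hk
    show k (∏ h : H, (h : MulAut P) x) = ∏ h : H, (h : MulAut P) x
    rw [map_prod]
    exact Fintype.prod_equiv (Equiv.mulLeft (⟨k, hk⟩ : H))
      (fun h => k ((h : MulAut P) x)) (fun h => (h : MulAut P) x) (fun h => rfl)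
  -- T is invariant under precomposition by elements of H
  have hTinv : ∀ k ∈ H, ∀ x : P, T (k x) = T x := by
    intro k hk x
    show ∏ h : H, (h : MulAut P) (k x) = ∏ h : H, (h : MulAut P) x
    exact Fintype.prod_equiv (Equiv.mulRight (⟨k, hk⟩ : H))
      (fun h => (h : MulAut P) (k x)) (fun h => (h : MulAut P) x) (fun h => rfl)
  -- the commutator subgroup is in the kernel of T
  have hker : commSubgroup H ≤ T.ker := by
    apply (Subgroup.closure_le _).2
    rintro y ⟨h, hh, x, rfl⟩
    simp only [SetLike.mem_coe, MonoidHom.mem_ker, map_mul, map_inv, hTinv h hh x,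
      mul_inv_cancel]
  -- T x * (x⁻¹)^n lies in the commutator subgroup
  have hprod : ∀ x : P, T x * (x⁻¹) ^ n ∈ commSubgroup H := by
    intro x
    have : T x * (x⁻¹) ^ n = ∏ h : H, ((h : MulAut P) x * x⁻¹) := by
      rw [Finset.prod_mul_distrib, hT, Finset.prod_const, Finset.card_univ, hncard]
    rw [this]
    exact Subgroup.prod_mem _ fun h _ =>
      Subgroup.subset_closure ⟨(h : MulAut P), h.2, x, rfl⟩
  constructor
  · -- trivial intersection
    rw [eq_bot_iff]
    rintro x ⟨hx1, hx2⟩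
    have h1 : T x = x ^ n := by
      rw [hT]
      calc ∏ h : H, (h : MulAut P) x = ∏ _h : H, x :=
            Finset.prod_congr rfl fun h _ => hx1 h h.2
        _ = x ^ n := by rw [Finset.prod_const, Finset.card_univ, hncard]
    have h2 : T x = 1 := hker hx2
    have hxn : x ^ n = 1 := h1 ▸ h2
    obtain ⟨k, hk⟩ := hP x
    have hd1 : orderOf x ∣ n := orderOf_dvd_of_pow_eq_one hxn
    have hd2 : orderOf x ∣ p ^ k := orderOf_dvd_of_pow_eq_one hk
    have hcop' : (orderOf x).Coprime (p ^ k) :=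
      Nat.Coprime.coprime_dvd_left hd1 (hcop.pow_right k)
    have : orderOf x = 1 := Nat.eq_one_of_dvd_coprimes hcop' dvd_rfl hd2
    have := orderOf_eq_one_iff.mp this
    simpa using this
  · -- the two subgroups generate P
    rw [eq_top_iff]
    intro x _
    obtain ⟨m, hm⟩ := hP.exists_card_eq
    have h' : (Nat.card P).Coprime n := by
      rw [hm]
      exact (hcop.symm.pow_left m)
    set y : P := (powCoprime h').symm x with hy
    have hyx : y ^ n = x := (powCoprime h').apply_symm_apply x
    have hc : (T y)⁻¹ * x ∈ commSubgroup H := by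
      have := (commSubgroup H).inv_mem (hprod y)
      rwa [mul_inv_rev, inv_pow, inv_inv, hyx, mul_comm] at this
    have : x = T y * ((T y)⁻¹ * x) := by group
    rw [this]
    exact Subgroup.mul_mem_sup (hTfix y) hc
end

section
/- Let P be a finite abelian p-group and H an abelian subgroup of Aut(P) whose order is coprime to p. Then the natural homomorphism H → Aut(P/Φ(P)) induced by reduction modulo the Frattini subgroup Φ(P) is injective. Furthermore, H acts indecomposably on P if and only if the induced action of H on P/Φ(P) is indecomposable. -/
/-!
View `P` additively as `M` and let `A ⊆ End(M)` be the subring generated by `H`: a finite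
commutative ring whose submodules of `M` are exactly the `H`-invariant subgroups of `P`.
Since `P` is an abelian `p`-group, `Φ(P) = Pᵖ`.

If `g ∈ H` is trivial on `P/Pᵖ`, then `g - 1` is nilpotent; together with `g ^ m = 1` for an
`m` prime to `p`, hence invertible on `M`, this forces `g = 1`.

If `H` acts indecomposably, Fitting's lemma makes every element of `A` a unit or nilpotent.
Choosing `q = p ^ k ≡ 1 [MOD |H|]`, the Frobenius `x ↦ x ^ q` of `A/pA` fixes the image of `H`,
hence all of `A/pA`, so nilpotent elements of `A` lie in `pA`. Over such a ring the cyclic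
submodule spanned by an element of maximal order has a complement, so `M = A x`; then every
invariant subgroup not inside `Pᵖ` contains a unit multiple of `x`, and `P/Φ(P)` admits no
decomposition. Conversely, a decomposition `P = P₁ × P₂` gives `Pᵖ = P₁ᵖ × P₂ᵖ`, so it descends
to `P/Φ(P)` with both factors nontrivial.
-/

/-- A set `S` of automorphisms of `A` acts indecomposably on `A` if there is no internal
direct product decomposition `A = A₁ × A₂` with `A₁`, `A₂` both non-trivial and both
invariant under every element of `S`. -/
def ActsIndecomposably {A : Type*} [Group A] (S : Set (MulAut A)) : Prop :=
  ¬ ∃ A₁ A₂ : Subgroup A, A₁ ≠ ⊥ ∧ A₂ ≠ ⊥ ∧ A₁ ⊓ A₂ = ⊥ ∧ A₁ ⊔ A₂ = ⊤ ∧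
      (∀ f ∈ S, ∀ x ∈ A₁, f x ∈ A₁) ∧ (∀ f ∈ S, ∀ x ∈ A₂, f x ∈ A₂)

/-- The automorphism of the quotient `P ⧸ N` by a characteristic (normal) subgroup `N`
induced by an automorphism of `P`. -/
def inducedQuotAut {P : Type*} [Group P] (N : Subgroup P) [N.Normal] [N.Characteristic]
    (h : MulAut P) : MulAut (P ⧸ N) :=
  QuotientGroup.congr N N h (Subgroup.characteristic_iff_map_eq.mp inferInstance h)

open scoped IsMulCommutative

def Module.IsIndecomposable (A M : Type*) [Semiring A] [AddCommMonoid M] [Module A M] : Prop :=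
  ∀ N₁ N₂ : Submodule A M, IsCompl N₁ N₂ → N₁ = ⊥ ∨ N₂ = ⊥

section Ring

variable {A M : Type*} [Ring A] [AddCommGroup M] [Module A M]

theorem isUnit_of_injective_smul [Finite M] [FaithfulSMul A M] {a : A}
    (ha : Function.Injective (a • · : M → M)) : IsUnit a := by
  have : Finite A := Finite.of_injective _ (smul_left_injective' (M := A) (α := M))
  refine IsLeftRegular.isUnit_of_finite fun b c hbc => eq_of_smul_eq_smul fun x => ha ?_
  simp only [← mul_smul, hbc]

theorem Submodule.exists_notMem_smul_mem {π : A} {N : Submodule A M} {z : M} (hz : z ∉ N)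
    {n : ℕ} (hn : π ^ n • z ∈ N) : ∃ y ∉ N, π • y ∈ N := by
  induction n generalizing z with
  | zero => exact absurd (by simpa using hn) hz
  | succ n ih =>
    by_cases hπz : π • z ∈ N
    · exact ⟨z, hz, hπz⟩
    · exact ih hπz (by rwa [← mul_smul, ← pow_succ])

theorem Submodule.eq_top_of_mem_of_forall_smul_ne {π : A} (hA : ∀ a : A, IsUnit a ∨ π ∣ a)
    {x : M} (hx : A ∙ x = ⊤) {N : Submodule A M} {y : M} (hy : y ∈ N) (hyπ : ∀ z : M, π • z ≠ y) :
    N = ⊤ := by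
  obtain ⟨a, rfl⟩ := Submodule.mem_span_singleton.mp (hx ▸ Submodule.mem_top : y ∈ A ∙ x)
  rcases hA a with hu | ⟨b, rfl⟩
  · rw [eq_top_iff, ← hx, Submodule.span_singleton_le_iff_mem]
    exact (Submodule.smul_mem_iff_of_isUnit _ hu).mp hy
  · exact absurd (mul_smul π b x).symm (hyπ _)

end Ring

section CommRing

variable {A M : Type*} [Ring A] [IsMulCommutative A] [AddCommGroup M] [Module A M]

theorem Module.IsIndecomposable.isUnit_or_isNilpotent [Finite M] [FaithfulSMul A M]
    (hM : Module.IsIndecomposable A M) (a : A) : IsUnit a ∨ IsNilpotent a := by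
  have : IsArtinian A M := isArtinian_of_finite
  obtain ⟨n, hn⟩ := Filter.eventually_atTop.mp
    (LinearMap.eventually_isCompl_ker_pow_range_pow (Algebra.lsmul A A M a))
  simp_rw [← map_pow] at hn
  rcases hM _ _ (hn (n + 1) n.le_succ) with hker | hrange
  · refine .inl <| isUnit_of_injective_smul fun x y hxy => LinearMap.ker_eq_bot.mp hker ?_
    simp only [Algebra.lsmul_coe, pow_succ, mul_smul]
    exact congrArg _ hxy
  · refine .inr ⟨n + 1, eq_of_smul_eq_smul (α := M) fun x => ?_⟩
    rw [zero_smul]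
    exact LinearMap.congr_fun (LinearMap.range_eq_bot.mp hrange) x

theorem isNilpotent_of_forall_exists_smul_eq [FaithfulSMul A M] {d π : A} {e : ℕ}
    (hM : ∀ y : M, π ^ e • y = 0) (hd : ∀ x : M, ∃ w, d • x = π • w) : IsNilpotent d := by
  have hdn : ∀ (n : ℕ) (x : M), ∃ w, d ^ n • x = π ^ n • w := by
    intro n
    induction n with
    | zero => exact fun x => ⟨x, by simp⟩
    | succ n ih =>
      intro x
      obtain ⟨w, hw⟩ := hd x
      obtain ⟨v, hv⟩ := ih w
      exact ⟨v, by rw [pow_succ, mul_smul, hw, smul_comm, hv, ← mul_smul, ← pow_succ']⟩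
  refine ⟨e, eq_of_smul_eq_smul (α := M) fun x => ?_⟩
  obtain ⟨w, hw⟩ := hdn e x
  rw [hw, hM, zero_smul]

namespace Submodule

section SpanSingleton

variable {π : A} (hA : ∀ a : A, IsUnit a ∨ π ∣ a) {e : ℕ} (hM : ∀ y : M, π ^ (e + 1) • y = 0)
  {x : M} (hx : π ^ e • x ≠ 0)
include hA hM hx

theorem exists_gt_disjoint_span_singleton {C : Submodule A M} (hC : Disjoint (A ∙ x) C)
    {y : M} (hy : y ∉ A ∙ x ⊔ C) (hπy : π • y ∈ A ∙ x ⊔ C) :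
    ∃ C', C < C' ∧ Disjoint (A ∙ x) C' := by
  obtain ⟨_, hax, c, hc, hy'⟩ := mem_sup.mp hπy
  obtain ⟨a, rfl⟩ := mem_span_singleton.mp hax
  -- `a` cannot be a unit, since `π ^ e • a • x = -(π ^ e • c)` lies in `(A ∙ x) ⊓ C = ⊥`.
  obtain ⟨b, rfl⟩ : π ∣ a := by
    refine (hA a).resolve_left fun ha => hx ?_
    have h0 : π ^ e • a • x + π ^ e • c = 0 := by
      rw [← smul_add, hy', ← mul_smul, ← pow_succ, hM]
    have hmem : π ^ e • a • x ∈ (A ∙ x) ⊓ C :=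
      ⟨smul_mem _ _ (mem_span_singleton.mpr ⟨a, rfl⟩),
        by rw [eq_neg_of_add_eq_zero_left h0]; exact C.neg_mem (C.smul_mem _ hc)⟩
    rw [hC.eq_bot, mem_bot, smul_comm] at hmem
    exact ha.smul_eq_zero.mp hmem
  set w := y - b • x with hw
  have hπw : π • w = c := by
    rw [hw, smul_sub, ← mul_smul, ← hy', add_sub_cancel_left]
  have hwC : w ∉ A ∙ x ⊔ C := fun h => hy <| by
    rw [← sub_add_cancel y (b • x)]
    exact add_mem h (mem_sup_left (smul_mem _ _ (mem_span_singleton_self x)))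
  refine ⟨C ⊔ A ∙ w, left_lt_sup.mpr fun h => hwC (mem_sup_right
    (h (mem_span_singleton_self w))), disjoint_def.mpr fun s hs hs' => ?_⟩
  obtain ⟨c₁, hc₁, _, haw, rfl⟩ := mem_sup.mp hs'
  obtain ⟨a₁, rfl⟩ := mem_span_singleton.mp haw
  rcases hA a₁ with hu | ⟨b₁, rfl⟩
  · refine absurd ((smul_mem_iff_of_isUnit _ hu).mp ?_) hwC
    rw [← add_sub_cancel_left c₁ (a₁ • w)]
    exact sub_mem (mem_sup_left hs) (mem_sup_right hc₁)
  · refine disjoint_def.mp hC _ hs (C.add_mem hc₁ ?_)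
    rw [mul_comm, mul_smul, hπw]
    exact C.smul_mem _ hc

theorem exists_isCompl_span_singleton [Finite M] : ∃ C, IsCompl (A ∙ x) C := by
  obtain ⟨C, hC, hmax⟩ := (Set.toFinite {C : Submodule A M | Disjoint (A ∙ x) C}).exists_maximal
    ⟨⊥, disjoint_bot_right⟩
  refine ⟨C, hC, codisjoint_iff.mpr (eq_top_iff'.mpr fun z => by_contra fun hz => ?_)⟩
  obtain ⟨y, hy, hπy⟩ := exists_notMem_smul_mem hz (n := e + 1) (by rw [hM]; exact zero_mem _)
  obtain ⟨C', hCC', hC'⟩ := exists_gt_disjoint_span_singleton hA hM hx hC hy hπy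
  exact hCC'.not_ge (hmax hC' hCC'.le)

theorem _root_.Module.IsIndecomposable.span_singleton_eq_top [Finite M]
    (hMi : Module.IsIndecomposable A M) : A ∙ x = ⊤ := by
  obtain ⟨C, hC⟩ := exists_isCompl_span_singleton hA hM hx
  rcases hMi _ _ hC with h | rfl
  · refine absurd ?_ hx
    rw [span_singleton_eq_bot.mp h, smul_zero]
  · simpa using hC.sup_eq_top

end SpanSingleton

end Submodule

end CommRing

theorem eq_one_of_pow_eq_one_of_isNilpotent_sub_one {R : Type*} [CommRing R] {u : R} {m : ℕ}
    (hm : IsUnit (m : R)) (hu : u ^ m = 1) (hnil : IsNilpotent (u - 1)) : u = 1 := by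
  have hsum : IsUnit (∑ i ∈ Finset.range m, u ^ i) := by
    have : IsNilpotent (∑ i ∈ Finset.range m, (u ^ i - 1)) :=
      isNilpotent_sum fun i _ => by
        rw [← geom_sum_mul]; exact (Commute.all _ _).isNilpotent_mul_left hnil
    simpa [Finset.sum_sub_distrib] using this.isUnit_add_left_of_commute hm (Commute.all _ _)
  rw [← sub_eq_zero, ← hsum.mul_right_eq_zero, geom_sum_mul, hu, sub_self]

theorem Subring.closure_closure_coe_preimage {R : Type*} [Ring R] {s : Set R} :
    closure (((↑) : closure s → R) ⁻¹' s) = ⊤ :=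
  eq_top_iff.2 fun x _ ↦ Subtype.recOn x fun _ hx ↦
    closure_induction (fun _ h ↦ subset_closure h) (zero_mem _) (one_mem _)
      (fun _ _ _ _ ↦ add_mem) (fun _ _ ↦ neg_mem) (fun _ _ _ _ ↦ mul_mem) hx

theorem pow_pow_eq_self_of_closure_eq_top {R : Type*} [CommRing R] {p : ℕ} [ExpChar R p]
    (k : ℕ) {S : Set R} (hS : Subring.closure S = ⊤) (hfix : ∀ s ∈ S, s ^ p ^ k = s) (r : R) :
    r ^ p ^ k = r := by
  have : Subring.closure S ≤ (iterateFrobenius R p k).eqLocus (RingHom.id R) :=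
    Subring.closure_le.mpr hfix
  exact this (hS ▸ Subring.mem_top r)

theorem natCast_dvd_of_isNilpotent {A : Type*} [Ring A] [IsMulCommutative A] {p k : ℕ}
    (hp : p.Prime) (hk : k ≠ 0) {S : Set A} (hS : Subring.closure S = ⊤)
    (hfix : ∀ s ∈ S, s ^ p ^ k = s) {a : A} (ha : IsNilpotent a) : (p : A) ∣ a := by
  by_cases hu : IsUnit (p : A)
  · exact hu.dvd
  have : Fact p.Prime := ⟨hp⟩
  have : CharP (A ⧸ Ideal.span {(p : A)}) p := CharP.quotient A p hu
  set f := Ideal.Quotient.mk (Ideal.span {(p : A)})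
  have hfS : Subring.closure (f '' S) = ⊤ := by
    rw [← RingHom.map_closure, hS, ← RingHom.range_eq_map,
      RingHom.range_eq_top.mpr Ideal.Quotient.mk_surjective]
  have hfix' := pow_pow_eq_self_of_closure_eq_top k hfS (by
    rintro _ ⟨s, hs, rfl⟩; rw [← map_pow, hfix s hs])
  have hiter : ∀ j, f a ^ (p ^ k) ^ j = f a := by
    intro j
    induction j with
    | zero => simp
    | succ j ih => rw [pow_succ, pow_mul, ih, hfix']
  obtain ⟨n, hn⟩ := ha.map f
  rw [← Ideal.mem_span_singleton, ← Ideal.Quotient.eq_zero_iff_mem, ← hiter n]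
  exact pow_eq_zero_of_le (Nat.lt_pow_self (Nat.one_lt_pow hk hp.one_lt)).le hn

section PGroup

open Subgroup

theorem Subgroup.mem_of_zpow_mem_of_isCoprime {G : Type*} [Group G] {K : Subgroup G} {g : G}
    {m n : ℤ} (hmn : IsCoprime m n) (hm : g ^ m ∈ K) (hn : g ^ n ∈ K) : g ∈ K := by
  obtain ⟨u, v, huv⟩ := hmn
  have : g = (g ^ m) ^ u * (g ^ n) ^ v := by
    rw [← zpow_mul, ← zpow_mul, ← zpow_add, mul_comm m, mul_comm n, huv, zpow_one]
  rw [this]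
  exact K.mul_mem (K.zpow_mem hm u) (K.zpow_mem hn v)

variable {P : Type*} [CommGroup P] {p : ℕ}

theorem IsPGroup.pow_mem_of_isCoatom (hP : IsPGroup p P) {K : Subgroup P} (hK : IsCoatom K)
    (y : P) : y ^ p ∈ K := by
  by_contra hy
  have hsup : K ⊔ zpowers (y ^ p) = ⊤ := hK.2 _ (left_lt_sup.mpr (by rwa [zpowers_le]))
  obtain ⟨k, hk, _, ⟨t, rfl⟩, hkt⟩ := mem_sup.mp (hsup ▸ mem_top y)
  obtain ⟨n, hn⟩ := hP y
  refine hy (K.pow_mem (mem_of_zpow_mem_of_isCoprime (m := 1 - p * t) (n := (p : ℤ) ^ n)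
    (IsCoprime.pow_right ⟨1, t, by ring⟩) ?_ ?_) p)
  · rw [zpow_sub, zpow_one, zpow_mul, zpow_natCast, ← eq_mul_inv_of_mul_eq hkt]
    exact hk
  · rw [← Nat.cast_pow, zpow_natCast, hn]
    exact K.one_mem

theorem exists_isCoatom_notMem_of_notMem_range_powMonoidHom [Finite P] (hp : p.Prime) {x : P}
    (hx : x ∉ (powMonoidHom p).range) : ∃ K : Subgroup P, IsCoatom K ∧ x ∉ K := by
  obtain ⟨K, ⟨hpK, hxK⟩, hmax⟩ := (Set.toFinite
    {K : Subgroup P | (powMonoidHom p).range ≤ K ∧ x ∉ K}).exists_maximal ⟨_, le_rfl, hx⟩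
  have hmax' : ∀ L, K ≤ L → x ∉ L → L ≤ K := fun L hKL hxL => hmax ⟨hpK.trans hKL, hxL⟩ hKL
  refine ⟨K, ⟨fun h => hxK (h ▸ mem_top x), fun L hKL => (eq_top_iff' L).mpr fun z => ?_⟩, hxK⟩
  have hxL : x ∈ L := by_contra fun hxL => hKL.not_ge (hmax' L hKL.le hxL)
  by_cases hzK : z ∈ K
  · exact hKL.le hzK
  have hx' : x ∈ K ⊔ zpowers z := by_contra fun h =>
    hzK (hmax' _ le_sup_left h (mem_sup_right (mem_zpowers z)))
  obtain ⟨k, hk, _, ⟨t, rfl⟩, rfl⟩ := mem_sup.mp hx'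
  have hzp : z ^ (p : ℤ) ∈ K := by rw [zpow_natCast]; exact hpK ⟨z, rfl⟩
  refine mem_of_zpow_mem_of_isCoprime (m := t) (n := p) ?_ ?_ (hKL.le hzp)
  · refine IsCoprime.symm ((Nat.prime_iff_prime_int.mp hp).coprime_iff_not_dvd.mpr ?_)
    rintro ⟨s, rfl⟩
    exact hxK (K.mul_mem hk (by simp only [zpow_mul]; exact K.zpow_mem hzp s))
  · simpa using L.mul_mem (L.inv_mem (hKL.le hk)) hxL

theorem IsPGroup.frattini_eq_range_powMonoidHom [Finite P] (hp : p.Prime) (hP : IsPGroup p P) :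
    frattini P = (powMonoidHom p).range := by
  refine le_antisymm (fun x hx => by_contra fun hx' => ?_) ?_
  · obtain ⟨K, hK, hxK⟩ := exists_isCoatom_notMem_of_notMem_range_powMonoidHom hp hx'
    exact hxK (frattini_le_coatom hK hx)
  · rintro _ ⟨y, rfl⟩
    exact mem_iInf.mpr fun K => mem_iInf.mpr fun hK => hP.pow_mem_of_isCoatom hK y

theorem IsPGroup.exists_forall_pow_pow_eq_one [Finite P] (hp : p.Prime) (hP : IsPGroup p P) :
    ∃ e, ∀ y : P, y ^ p ^ e = 1 := by
  have : Fact p.Prime := ⟨hp⟩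
  obtain ⟨e, he⟩ := hP.exists_card_eq
  exact ⟨e, fun y => he ▸ pow_card_eq_one'⟩

theorem IsPGroup.exists_pow_pow_ne_one [Finite P] [Nontrivial P] (hp : p.Prime)
    (hP : IsPGroup p P) : ∃ (e : ℕ) (x : P), (∀ y : P, y ^ p ^ (e + 1) = 1) ∧ x ^ p ^ e ≠ 1 := by
  have : Fact p.Prime := ⟨hp⟩
  obtain ⟨x, hx⟩ := Monoid.exists_orderOf_eq_exponent (G := P) Monoid.ExponentExists.of_finite
  obtain ⟨k, hk⟩ := IsPGroup.iff_orderOf.mp hP x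
  obtain ⟨e, rfl⟩ : ∃ e, k = e + 1 := Nat.exists_eq_add_one.mpr <| Nat.pos_of_ne_zero fun h0 =>
    not_subsingleton P (Monoid.exp_eq_one_iff.mp (by rw [← hx, hk, h0, pow_zero]))
  refine ⟨e, x, fun y => hk ▸ hx ▸ Monoid.pow_exponent_eq_one y, pow_ne_one_of_lt_orderOf
    (pow_ne_zero e hp.ne_zero) (hk ▸ Nat.pow_lt_pow_right hp.one_lt e.lt_succ_self)⟩

theorem IsPGroup.exists_forall_pow_ne [Finite P] [Nontrivial P] (hp : p.Prime)
    (hP : IsPGroup p P) : ∃ y : P, ∀ z : P, z ^ p ≠ y := by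
  have : Fact p.Prime := ⟨hp⟩
  obtain ⟨n, hn, hcard⟩ := hP.nontrivial_iff_card.mp ‹_›
  obtain ⟨g, hg⟩ := exists_prime_orderOf_dvd_card' p (hcard ▸ dvd_pow_self p hn.ne')
  have hinj : ¬ Function.Injective (· ^ p : P → P) := fun h =>
    hp.one_lt.ne' (hg ▸ orderOf_eq_one_iff.mpr (h (by simp [← hg, pow_orderOf_eq_one])))
  simpa [Finite.injective_iff_surjective, Function.Surjective] using hinj

section Decomposition

variable {P₁ P₂ : Subgroup P} (hinf : P₁ ⊓ P₂ = ⊥) (hsup : P₁ ⊔ P₂ = ⊤)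
include hinf hsup

theorem exists_pow_eq_of_mul_mem_range_powMonoidHom {y₁ y₂ : P} (hy₁ : y₁ ∈ P₁) (hy₂ : y₂ ∈ P₂)
    (h : y₁ * y₂ ∈ (powMonoidHom p).range) : ∃ z ∈ P₁, z ^ p = y₁ := by
  obtain ⟨z, hz⟩ := h
  obtain ⟨z₁, hz₁, z₂, hz₂, rfl⟩ := mem_sup.mp (hsup ▸ mem_top z)
  refine ⟨z₁, hz₁, ?_⟩
  have hsplit : z₁ ^ p * y₁⁻¹ = y₂ * (z₂ ^ p)⁻¹ := by
    rw [powMonoidHom_apply, mul_pow] at hz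
    rw [mul_inv_eq_iff_eq_mul, mul_right_comm, mul_comm y₂, ← hz, mul_inv_cancel_right]
  have hmem : z₁ ^ p * y₁⁻¹ ∈ P₁ ⊓ P₂ :=
    ⟨P₁.mul_mem (P₁.pow_mem hz₁ p) (P₁.inv_mem hy₁),
      hsplit ▸ P₂.mul_mem hy₂ (P₂.inv_mem (P₂.pow_mem hz₂ p))⟩
  rwa [hinf, mem_bot, mul_inv_eq_one] at hmem

theorem map_mk_frattini_ne_bot [Finite P] (hp : p.Prime) (hP : IsPGroup p P) (h₁ : P₁ ≠ ⊥) :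
    P₁.map (QuotientGroup.mk' (frattini P)) ≠ ⊥ := by
  have : Nontrivial P₁ := (nontrivial_iff_ne_bot P₁).mpr h₁
  obtain ⟨⟨y, hy⟩, hyp⟩ := (hP.to_subgroup P₁).exists_forall_pow_ne hp
  intro hbot
  have hyΦ : y ∈ frattini P := by
    rw [← QuotientGroup.eq_one_iff, ← mem_bot, ← hbot]
    exact mem_map_of_mem _ hy
  rw [hP.frattini_eq_range_powMonoidHom hp, ← mul_one y] at hyΦ
  obtain ⟨z, hz, hzy⟩ := exists_pow_eq_of_mul_mem_range_powMonoidHom hinf hsup hy P₂.one_mem hyΦ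
  exact hyp ⟨z, hz⟩ (Subtype.ext hzy)

end Decomposition

theorem actsIndecomposably_of_inducedQuotAut_frattini [Finite P] (hp : p.Prime)
    (hP : IsPGroup p P) {S : Set (MulAut P)}
    (hS : ActsIndecomposably (inducedQuotAut (frattini P) '' S)) : ActsIndecomposably S := by
  rintro ⟨P₁, P₂, h₁, h₂, hinf, hsup, hi₁, hi₂⟩
  have hΦ := hP.frattini_eq_range_powMonoidHom hp
  set π := QuotientGroup.mk' (frattini P)
  refine hS ⟨P₁.map π, P₂.map π, map_mk_frattini_ne_bot hinf hsup hp hP h₁,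
    map_mk_frattini_ne_bot (inf_comm P₁ P₂ ▸ hinf) (sup_comm P₁ P₂ ▸ hsup) hp hP h₂, ?_,
    by rw [← Subgroup.map_sup, hsup, ← MonoidHom.range_eq_map, QuotientGroup.range_mk'], ?_, ?_⟩
  · refine eq_bot_iff.mpr fun _ ⟨⟨y₁, hy₁, hv⟩, ⟨y₂, hy₂, hv₂⟩⟩ => ?_
    subst hv
    have := QuotientGroup.eq.mp hv₂
    rw [mul_comm, hΦ] at this
    obtain ⟨z, -, rfl⟩ :=
      exists_pow_eq_of_mul_mem_range_powMonoidHom hinf hsup hy₁ (P₂.inv_mem hy₂) this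
    rw [mem_bot, QuotientGroup.mk'_apply, QuotientGroup.eq_one_iff, hΦ]
    exact ⟨z, rfl⟩
  · rintro _ ⟨f, hf, rfl⟩ _ ⟨y, hy, rfl⟩
    exact ⟨f y, hi₁ f hf y hy, rfl⟩
  · rintro _ ⟨f, hf, rfl⟩ _ ⟨y, hy, rfl⟩
    exact ⟨f y, hi₂ f hf y hy, rfl⟩

theorem Additive.natCast_smul {A : Type*} [Semiring A] [Module A (Additive P)] (n : ℕ)
    (x : Additive P) : (n : A) • x = .ofMul (x.toMul ^ n) := by
  rw [Nat.cast_smul_eq_nsmul, ofMul_pow, ofMul_toMul]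

def MulAut.toIntLinearEnd : MulAut P →* Module.End ℤ (Additive P) where
  toFun f := (MulEquiv.toAdditive f).toAddMonoidHom.toIntLinearMap
  map_one' := rfl
  map_mul' _ _ := rfl

theorem MulAut.toIntLinearEnd_injective : Function.Injective (toIntLinearEnd (P := P)) :=
  fun _ _ h => MulEquiv.ext fun x => congrArg Additive.toMul (LinearMap.congr_fun h (.ofMul x))

theorem IsPGroup.eq_one_of_forall_mul_inv_mem_range_powMonoidHom [Finite P] (hp : p.Prime)
    (hP : IsPGroup p P) {g : MulAut P} (hg : (orderOf g).Coprime p)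
    (htriv : ∀ x, g x * x⁻¹ ∈ (powMonoidHom p).range) : g = 1 := by
  set f := MulAut.toIntLinearEnd g
  have : IsMulCommutative (Subring.closure {f}) := Subring.isMulCommutative_closure (by simp)
  have : FaithfulSMul (Subring.closure {f}) (Additive P) :=
    ⟨fun h => Subtype.ext (LinearMap.ext h)⟩
  let u : Subring.closure {f} := ⟨f, Subring.subset_closure rfl⟩
  have hm : IsUnit ((orderOf g : ℕ) : Subring.closure {f}) :=
    isUnit_of_injective_smul (M := Additive P) fun x y hxy => by
      simp only [Additive.natCast_smul] at hxy
      exact congrArg Additive.ofMul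
        ((hP.powEquiv hg.symm).injective (Additive.ofMul.injective hxy))
  have hu : u ^ orderOf g = 1 := Subtype.ext <| by
    simp only [u, f, SubmonoidClass.coe_pow, ← map_pow, pow_orderOf_eq_one, map_one,
      OneMemClass.coe_one]
  obtain ⟨e, he⟩ := hP.exists_forall_pow_pow_eq_one hp
  have hnil : IsNilpotent (u - 1) := by
    refine isNilpotent_of_forall_exists_smul_eq (M := Additive P) (π := (p : Subring.closure {f}))
      (e := e) (fun y => ?_) (fun x => ?_)
    · rw [← Nat.cast_pow, Additive.natCast_smul, he]
      rfl
    · obtain ⟨w, hw⟩ := htriv x.toMul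
      refine ⟨.ofMul w, ?_⟩
      rw [Additive.natCast_smul, toMul_ofMul, ← powMonoidHom_apply, hw, ← div_eq_mul_inv,
        ofMul_div, sub_smul, one_smul]
      rfl
  exact MulAut.toIntLinearEnd_injective
    (congrArg Subtype.val (eq_one_of_pow_eq_one_of_isNilpotent_sub_one hm hu hnil))

theorem injective_inducedQuotAut_frattini [Finite P] (hp : p.Prime) (hP : IsPGroup p P)
    {H : Subgroup (MulAut P)} (hcop : Nat.Coprime (Nat.card H) p) :
    Function.Injective (fun h : H => inducedQuotAut (frattini P) (h : MulAut P)) := by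
  intro h₁ h₂ heq
  rw [← mul_inv_eq_one]
  refine Subtype.ext (hP.eq_one_of_forall_mul_inv_mem_range_powMonoidHom hp
    (hcop.coprime_dvd_left (orderOf_coe (h₁ * h₂⁻¹) ▸ orderOf_dvd_natCard _)) fun x => ?_)
  have hx : (x : P ⧸ frattini P) = ((h₁ : MulAut P) ((h₂ : MulAut P)⁻¹ x) : P) := by
    have := congrArg (fun φ : MulAut (P ⧸ frattini P) =>
      φ (((h₂ : MulAut P)⁻¹ x : P) : P ⧸ frattini P)) heq
    exact (congrArg _ (MulAut.apply_inv_self (M := P) h₂ x).symm).trans this.symm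
  have := QuotientGroup.eq.mp hx
  rwa [mul_comm, hP.frattini_eq_range_powMonoidHom hp] at this

/-- The image of the group ring `ℤ[H]` in `End(P)`. -/
def envelopingRing (H : Subgroup (MulAut P)) : Subring (Module.End ℤ (Additive P)) :=
  Subring.closure (MulAut.toIntLinearEnd '' H)

namespace envelopingRing

variable {H : Subgroup (MulAut P)}

instance : FaithfulSMul (envelopingRing H) (Additive P) :=
  ⟨fun h => Subtype.ext (LinearMap.ext h)⟩

theorem isMulCommutative (hab : ∀ a ∈ H, ∀ b ∈ H, a * b = b * a) :
    IsMulCommutative (envelopingRing H) :=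
  Subring.isMulCommutative_closure <| by
    rintro _ ⟨a, ha, rfl⟩ _ ⟨b, hb, rfl⟩
    rw [← map_mul, ← map_mul, hab a ha b hb]

theorem toIntLinearEnd_mem {h : MulAut P} (hh : h ∈ H) :
    MulAut.toIntLinearEnd h ∈ envelopingRing H :=
  Subring.subset_closure ⟨h, hh, rfl⟩

def invariantSubmodule (W : Subgroup P) (hW : ∀ h ∈ H, ∀ x ∈ W, h x ∈ W) :
    Submodule (envelopingRing H) (Additive P) where
  carrier := {x | x.toMul ∈ W}
  add_mem' := W.mul_mem
  zero_mem' := W.one_mem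
  smul_mem' := by
    suffices ∀ a ∈ envelopingRing H, ∀ x : Additive P, x.toMul ∈ W → (a x).toMul ∈ W from
      fun a x hx => this a a.2 x hx
    intro a ha
    induction ha using Subring.closure_induction with
    | mem _ hf => obtain ⟨h, hh, rfl⟩ := hf; exact fun x hx => hW h hh _ hx
    | zero => exact fun _ _ => W.one_mem
    | one => exact fun _ hx => hx
    | add _ _ _ _ ha hb => exact fun x hx => W.mul_mem (ha x hx) (hb x hx)
    | neg _ _ ha => exact fun x hx => W.inv_mem (ha x hx)
    | mul _ _ _ _ ha hb => exact fun x hx => ha _ (hb x hx)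

theorem isIndecomposable (hind : ActsIndecomposably (H : Set (MulAut P))) :
    Module.IsIndecomposable (envelopingRing H) (Additive P) := by
  intro N₁ N₂ hN
  by_contra! hne
  let S (N : Submodule (envelopingRing H) (Additive P)) : Subgroup P :=
    AddSubgroup.toSubgroup' N.toAddSubgroup
  have hS : ∀ N, N ≠ ⊥ → S N ≠ ⊥ := fun N hN hSN => by
    obtain ⟨x, hx, hx0⟩ := (Submodule.ne_bot_iff N).mp hN
    have : x.toMul ∈ S N := hx
    rw [hSN, mem_bot] at this
    exact hx0 (congrArg Additive.ofMul this)
  have hinv : ∀ N, ∀ h ∈ (H : Set (MulAut P)), ∀ x ∈ S N, h x ∈ S N := fun N h hh x hx =>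
    N.smul_mem (⟨_, toIntLinearEnd_mem hh⟩ : envelopingRing H) hx
  refine hind ⟨S N₁, S N₂, hS N₁ hne.1, hS N₂ hne.2, eq_bot_iff.mpr fun x hx => ?_,
    (eq_top_iff' _).mpr fun x => ?_, hinv N₁, hinv N₂⟩
  · have : Additive.ofMul x ∈ N₁ ⊓ N₂ := hx
    rwa [hN.inf_eq_bot, Submodule.mem_bot] at this
  · obtain ⟨y, hy, z, hz, hyz⟩ := Submodule.mem_sup.mp (hN.sup_eq_top ▸ Submodule.mem_top :
      Additive.ofMul x ∈ N₁ ⊔ N₂)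
    exact mem_sup.mpr ⟨y.toMul, hy, z.toMul, hz, congrArg Additive.toMul hyz⟩

theorem isUnit_or_natCast_dvd [Finite P] (hp : p.Prime)
    (hab : ∀ a ∈ H, ∀ b ∈ H, a * b = b * a) (hcop : Nat.Coprime (Nat.card H) p)
    (hind : ActsIndecomposably (H : Set (MulAut P))) (a : envelopingRing H) :
    IsUnit a ∨ (p : envelopingRing H) ∣ a := by
  have := isMulCommutative hab
  set k := (Nat.card H).totient
  have hk : k ≠ 0 := (Nat.totient_pos.mpr (Nat.card_pos (α := H))).ne'
  have hgen : Subring.closure (((↑) : envelopingRing H → Module.End ℤ (Additive P)) ⁻¹'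
      (MulAut.toIntLinearEnd '' H)) = ⊤ :=
    Subring.closure_closure_coe_preimage
  have hfix : ∀ s ∈ (((↑) : envelopingRing H → Module.End ℤ (Additive P)) ⁻¹'
      (MulAut.toIntLinearEnd '' H)), s ^ p ^ k = s := by
    rintro s ⟨h, hh, hs⟩
    have hhk : (⟨h, hh⟩ : H) ^ p ^ k = ⟨h, hh⟩ := by
      rw [← pow_mod_natCard, Nat.ModEq.pow_totient hcop.symm, pow_mod_natCard, pow_one]
    refine Subtype.ext ?_
    rw [SubmonoidClass.coe_pow, ← hs, ← map_pow]
    congr 1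
    simpa using congrArg Subtype.val hhk
  exact ((isIndecomposable hind).isUnit_or_isNilpotent a).imp_right
    (natCast_dvd_of_isNilpotent hp hk hgen hfix)

end envelopingRing

theorem ActsIndecomposably.inducedQuotAut_frattini [Finite P] (hp : p.Prime) (hP : IsPGroup p P)
    {H : Subgroup (MulAut P)} (hab : ∀ a ∈ H, ∀ b ∈ H, a * b = b * a)
    (hcop : Nat.Coprime (Nat.card H) p) (hind : ActsIndecomposably (H : Set (MulAut P))) :
    ActsIndecomposably (inducedQuotAut (frattini P) '' H) := by
  have := envelopingRing.isMulCommutative hab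
  have hΦ := hP.frattini_eq_range_powMonoidHom hp
  have hA := envelopingRing.isUnit_or_natCast_dvd hp hab hcop hind
  rintro ⟨V₁, V₂, hV₁, hV₂, hinf, -, hi₁, -⟩
  obtain ⟨_, hv, hv1⟩ := V₁.bot_or_exists_ne_one.resolve_left hV₁
  obtain ⟨y, rfl⟩ := QuotientGroup.mk_surjective (s := frattini P) ‹_›
  have : Nontrivial P := nontrivial_of_ne y 1 (by rintro rfl; exact hv1 rfl)
  obtain ⟨e, x, hexp, hx⟩ := hP.exists_pow_pow_ne_one hp
  have hcyc : envelopingRing H ∙ Additive.ofMul x = ⊤ :=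
    (envelopingRing.isIndecomposable hind).span_singleton_eq_top hA (e := e)
      (fun z => by rw [← Nat.cast_pow, Additive.natCast_smul, hexp]; rfl)
      (by rw [← Nat.cast_pow, Additive.natCast_smul]
          exact fun h => hx (congrArg Additive.toMul h))
  have hW := Submodule.eq_top_of_mem_of_forall_smul_ne hA hcyc
    (N := envelopingRing.invariantSubmodule (V₁.comap (QuotientGroup.mk' _))
      fun h hh z hz => hi₁ _ ⟨h, hh, rfl⟩ _ hz) (y := .ofMul y) hv fun z hz => hv1 <| by
        rw [Additive.natCast_smul] at hz
        rw [← Additive.ofMul.injective hz, QuotientGroup.eq_one_iff, hΦ]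
        exact ⟨_, rfl⟩
  refine hV₂ (eq_bot_iff.mpr fun q hq => hinf ▸ ⟨?_, hq⟩)
  obtain ⟨z, rfl⟩ := QuotientGroup.mk_surjective q
  exact (hW ▸ Submodule.mem_top : Additive.ofMul z ∈ envelopingRing.invariantSubmodule _ _)

end PGroup

/-- Let `P` be a finite abelian `p`-group and `H` an abelian subgroup of `Aut(P)` whose
order is coprime to `p`.  Then the natural homomorphism `H → Aut(P/Φ(P))` induced by
reduction modulo the Frattini subgroup `Φ(P)` is injective.  Furthermore, `H` acts
indecomposably on `P` if and only if the induced action of `H` on `P/Φ(P)` is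
indecomposable. -/
theorem stmt6 (p : ℕ) (hp : p.Prime) (P : Type) [CommGroup P] [Finite P]
    (hP : IsPGroup p P) (H : Subgroup (MulAut P))
    (hab : ∀ a ∈ H, ∀ b ∈ H, a * b = b * a)
    (hcop : Nat.Coprime (Nat.card H) p) :
    Function.Injective (fun h : H => inducedQuotAut (frattini P) (h : MulAut P)) ∧
    (ActsIndecomposably (H : Set (MulAut P)) ↔
      ActsIndecomposably ((fun h => inducedQuotAut (frattini P) h) '' (H : Set (MulAut P)))) :=
  ⟨injective_inducedQuotAut_frattini hp hP hcop,
    fun hind => hind.inducedQuotAut_frattini hp hP hab hcop,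
    actsIndecomposably_of_inducedQuotAut_frattini hp hP⟩
end

section
/- Let P be a finite abelian p-group and H an abelian subgroup of Aut(P) whose order is coprime to p. Let Irr(P) denote the group of homomorphisms P → ℂˣ, with H acting by (h·λ)(x) = λ(h⁻¹(x)) for h ∈ H, x ∈ P, λ ∈ Irr(P). Then the resulting homomorphism from H to the permutation group of Irr(P) is injective, and the action of H on the group Irr(P) is indecomposable if and only if the action of H on P is indecomposable. -/
/-- The automorphism of the character group `Irr(P) = (P →* ℂˣ)` induced by an
automorphism `h` of `P`:  `(h · λ)(x) = λ(h⁻¹(x))`. -/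
def dualAut {P : Type*} [CommGroup P] (h : MulAut P) : MulAut (P →* ℂˣ) where
  toFun χ := χ.comp h.symm.toMonoidHom
  invFun χ := χ.comp h.toMonoidHom
  left_inv χ := by ext x; simp
  right_inv χ := by ext x; simp
  map_mul' χ μ := by ext x; simp

namespace Stmt7Aux

section Ann

variable {G : Type*} [CommGroup G]

/-- The annihilator of a subgroup inside the dual group. -/
def ann (A : Subgroup G) : Subgroup (G →* ℂˣ) where
  carrier := { χ | ∀ x ∈ A, χ x = 1 }
  one_mem' := fun x _ => rfl
  mul_mem' := by
    intro χ μ hχ hμ x hx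
    simp [hχ x hx, hμ x hx]
  inv_mem' := by
    intro χ hχ x hx
    simp [hχ x hx]

variable [Finite G]
set_option linter.unusedSectionVars false

instance : NeZero ((Monoid.exponent G : ℂ)) :=
  ⟨Nat.cast_ne_zero.mpr Monoid.exponent_ne_zero_of_finite⟩

lemma eq_one_of_forall {a : G} (h : ∀ φ : G →* ℂˣ, φ a = 1) : a = 1 := by
  by_contra hne
  obtain ⟨φ, hφ⟩ := CommGroup.exists_apply_ne_one_of_hasEnoughRootsOfUnity G ℂ hne
  exact hφ (h φ)

noncomputable instance : Finite (G →* ℂˣ) :=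
  Finite.of_equiv G (CommGroup.monoidHom_mulEquiv_of_hasEnoughRootsOfUnity G ℂ).some.symm.toEquiv

lemma card_dual : Nat.card (G →* ℂˣ) = Nat.card G :=
  Nat.card_eq_of_bijective _
    (CommGroup.monoidHom_mulEquiv_of_hasEnoughRootsOfUnity G ℂ).some.bijective

lemma ann_ne_bot {A : Subgroup G} (hA : A ≠ ⊤) : ann A ≠ ⊥ := by
  obtain ⟨x, hx⟩ : ∃ x, x ∉ A := by
    by_contra h
    push_neg at h
    exact hA ((Subgroup.eq_top_iff' A).mpr h)
  have hq : ((x : G ⧸ A) : G ⧸ A) ≠ 1 := by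
    simpa [QuotientGroup.eq_one_iff] using hx
  obtain ⟨φ, hφ⟩ := CommGroup.exists_apply_ne_one_of_hasEnoughRootsOfUnity (G ⧸ A) ℂ hq
  intro hbot
  have hmem : φ.comp (QuotientGroup.mk' A) ∈ ann A := by
    intro a ha
    simp [(QuotientGroup.eq_one_iff a).mpr ha]
  rw [hbot, Subgroup.mem_bot] at hmem
  apply hφ
  have := DFunLike.congr_fun hmem x
  simpa using this

lemma ann_inf_ann {A₁ A₂ : Subgroup G} (hsup : A₁ ⊔ A₂ = ⊤) : ann A₁ ⊓ ann A₂ = ⊥ := by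
  rw [eq_bot_iff]
  intro χ hχ
  rw [Subgroup.mem_inf] at hχ
  rw [Subgroup.mem_bot]
  ext x
  have hx : x ∈ A₁ ⊔ A₂ := hsup ▸ Subgroup.mem_top x
  obtain ⟨a, ha, b, hb, rfl⟩ := Subgroup.mem_sup.mp hx
  simp [hχ.1 a ha, hχ.2 b hb]

lemma ann_sup_ann {A₁ A₂ : Subgroup G} (hinf : A₁ ⊓ A₂ = ⊥) (hsup : A₁ ⊔ A₂ = ⊤) :
    ann A₁ ⊔ ann A₂ = ⊤ := by
  -- the product isomorphism
  set f : A₁ × A₂ →* G := (A₁.subtype).coprod (A₂.subtype) with hf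
  have hfb : Function.Bijective f := by
    constructor
    · rw [← MonoidHom.ker_eq_bot_iff, eq_bot_iff]
      rintro ⟨a, b⟩ hab
      have h1 : (a : G) * b = 1 := hab
      have ha2 : (a : G) ∈ A₂ := by
        have : (a : G) = (b : G)⁻¹ := eq_inv_of_mul_eq_one_left h1
        rw [this]; exact A₂.inv_mem b.2
      have : (a : G) ∈ A₁ ⊓ A₂ := ⟨a.2, ha2⟩
      rw [hinf, Subgroup.mem_bot] at this
      have hb1 : (b : G) = 1 := by rw [this, one_mul] at h1; exact h1
      rw [Subgroup.mem_bot]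
      exact Prod.ext_iff.mpr ⟨Subtype.ext this, Subtype.ext hb1⟩
    · intro x
      have hx : x ∈ A₁ ⊔ A₂ := hsup ▸ Subgroup.mem_top x
      obtain ⟨a, ha, b, hb, rfl⟩ := Subgroup.mem_sup.mp hx
      exact ⟨(⟨a, ha⟩, ⟨b, hb⟩), rfl⟩
  set e : (A₁ × A₂) ≃* G := MulEquiv.ofBijective f hfb with he
  rw [eq_top_iff]
  intro χ _
  set χ₂ : G →* ℂˣ := ((χ.comp A₂.subtype).comp (MonoidHom.snd A₁ A₂)).comp
    (e.symm : G ≃* A₁ × A₂).toMonoidHom with hχ₂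
  set χ₁ : G →* ℂˣ := ((χ.comp A₁.subtype).comp (MonoidHom.fst A₁ A₂)).comp
    (e.symm : G ≃* A₁ × A₂).toMonoidHom with hχ₁
  have key : ∀ x : G, χ₁ x * χ₂ x = χ x := by
    intro x
    have : (e.symm x).1.1 * (e.symm x).2.1 = x := by
      have h' : f (e.symm x) = x := e.apply_symm_apply x
      simpa [hf, MonoidHom.coprod_apply] using h'
    calc χ₁ x * χ₂ x = χ ((e.symm x).1.1 * (e.symm x).2.1) := by
          simp [hχ₁, hχ₂, map_mul]
      _ = χ x := by rw [this]
  have h1 : χ₁ ∈ ann A₂ := by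
    intro x hx
    have : e.symm x = (1, ⟨x, hx⟩) := by
      rw [MulEquiv.symm_apply_eq]
      show x = f (1, ⟨x, hx⟩)
      simp [hf]
    simp [hχ₁, this]
  have h2 : χ₂ ∈ ann A₁ := by
    intro x hx
    have : e.symm x = (⟨x, hx⟩, 1) := by
      rw [MulEquiv.symm_apply_eq]
      show x = f (⟨x, hx⟩, 1)
      simp [hf]
    simp [hχ₂, this]
  have : χ = χ₂ * χ₁ := by
    ext x
    simp [mul_comm, key x]
  rw [this]
  exact Subgroup.mul_mem _ (Subgroup.mem_sup_left h2) (Subgroup.mem_sup_right h1)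

lemma ann_invariant {A : Subgroup G} {h : MulAut G} (hh : ∀ x ∈ A, h⁻¹ x ∈ A)
    {χ : G →* ℂˣ} (hχ : χ ∈ ann A) : dualAut h χ ∈ ann A := by
  intro x hx
  show χ (h.symm x) = 1
  exact hχ _ (hh x hx)

/-- A decomposition of `G` under `S` yields a decomposition of the dual group under
the dual automorphisms, provided `S` is closed under inverses. -/
lemma dual_decomp {S : Set (MulAut G)} (hS : ∀ f ∈ S, f⁻¹ ∈ S)
    (h : ¬ ActsIndecomposably S) :
    ¬ ActsIndecomposably (A := G →* ℂˣ) ((fun h : MulAut G => dualAut h) '' S) := by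
  rw [ActsIndecomposably, not_not] at h ⊢
  obtain ⟨A₁, A₂, hA₁, hA₂, hinf, hsup, hI₁, hI₂⟩ := h
  have hA₂top : A₂ ≠ ⊤ := fun h => hA₁ (by rw [← hinf, h, inf_top_eq])
  have hA₁top : A₁ ≠ ⊤ := fun h => hA₂ (by rw [← hinf, h, top_inf_eq])
  refine ⟨ann A₂, ann A₁, ann_ne_bot hA₂top, ann_ne_bot hA₁top, ?_, ?_, ?_, ?_⟩
  · exact ann_inf_ann (by rw [sup_comm]; exact hsup)
  · exact ann_sup_ann (by rw [inf_comm]; exact hinf) (by rw [sup_comm]; exact hsup)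
  · rintro f ⟨h, hh, rfl⟩ χ hχ
    exact ann_invariant (fun x hx => hI₂ _ (hS h hh) x hx) hχ
  · rintro f ⟨h, hh, rfl⟩ χ hχ
    exact ann_invariant (fun x hx => hI₁ _ (hS h hh) x hx) hχ

/-- The evaluation homomorphism into the double dual. -/
def evalHom (G : Type*) [CommGroup G] : G →* ((G →* ℂˣ) →* ℂˣ) where
  toFun x := { toFun := fun χ => χ x
               map_one' := rfl
               map_mul' := fun χ μ => rfl }
  map_one' := by ext χ; simp
  map_mul' x y := by ext χ; simp

lemma evalHom_bijective : Function.Bijective (evalHom G) := by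
  rw [Nat.bijective_iff_injective_and_card]
  constructor
  · intro x y hxy
    have h1 : x * y⁻¹ = 1 := by
      apply eq_one_of_forall
      intro φ
      have := DFunLike.congr_fun hxy φ
      simp only [evalHom, MonoidHom.coe_mk, OneHom.coe_mk] at this
      simp [map_mul, this]
    exact mul_inv_eq_one.mp h1
  · rw [card_dual, card_dual]

end Ann

section Transfer

variable {G G' : Type*} [Group G] [Group G']

/-- A decomposition transfers along a `MulEquiv` intertwining the automorphism sets. -/
lemma transfer_decomp (e : G ≃* G') (S : Set (MulAut G)) (S' : Set (MulAut G'))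
    (hcomp : ∀ f ∈ S, ∃ f' ∈ S', ∀ x : G, e (f x) = f' (e x)) :
    ¬ ActsIndecomposably S' → ¬ ActsIndecomposably S := by
  intro hS' hS
  rw [ActsIndecomposably, not_not] at hS'
  obtain ⟨B₁, B₂, hB₁, hB₂, hinf, hsup, hI₁, hI₂⟩ := hS'
  apply hS
  refine ⟨B₁.map e.symm.toMonoidHom, B₂.map e.symm.toMonoidHom, ?_, ?_, ?_, ?_, ?_, ?_⟩
  · rwa [Ne, Subgroup.map_eq_bot_iff_of_injective _ e.symm.injective]
  · rwa [Ne, Subgroup.map_eq_bot_iff_of_injective _ e.symm.injective]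
  · rw [← Subgroup.map_inf _ _ _ e.symm.injective, hinf, Subgroup.map_bot]
  · rw [← Subgroup.map_sup, hsup]
    rw [eq_top_iff]
    intro x _
    exact ⟨e x, Subgroup.mem_top _, e.symm_apply_apply x⟩
  · intro f hf x hx
    obtain ⟨y, hy, rfl⟩ := hx
    obtain ⟨f', hf', hcf⟩ := hcomp f hf
    refine ⟨f' y, hI₁ f' hf' y hy, ?_⟩
    have := hcf (e.symm y)
    rw [e.apply_symm_apply] at this
    show e.symm (f' y) = f (e.symm y)
    rw [← this, e.symm_apply_apply]
  · intro f hf x hx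
    obtain ⟨y, hy, rfl⟩ := hx
    obtain ⟨f', hf', hcf⟩ := hcomp f hf
    refine ⟨f' y, hI₂ f' hf' y hy, ?_⟩
    have := hcf (e.symm y)
    rw [e.apply_symm_apply] at this
    show e.symm (f' y) = f (e.symm y)
    rw [← this, e.symm_apply_apply]

end Transfer

lemma dualAut_inv {G : Type*} [CommGroup G] (h : MulAut G) :
    dualAut h⁻¹ = (dualAut h)⁻¹ := by
  ext χ x
  rfl

end Stmt7Aux

open Stmt7Aux in
/-- Let `P` be a finite abelian `p`-group and `H` an abelian subgroup of `Aut(P)` whose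
order is coprime to `p`.  Let `Irr(P)` denote the group of homomorphisms `P → ℂˣ`, with
`H` acting by `(h·λ)(x) = λ(h⁻¹(x))`.  Then the resulting homomorphism from `H` to the
permutation group of `Irr(P)` is injective, and the action of `H` on the group `Irr(P)`
is indecomposable if and only if the action of `H` on `P` is indecomposable. -/
theorem stmt7 (p : ℕ) (hp : p.Prime) (P : Type) [CommGroup P] [Finite P]
    (hP : IsPGroup p P) (H : Subgroup (MulAut P))
    (hab : ∀ a ∈ H, ∀ b ∈ H, a * b = b * a)
    (hcop : Nat.Coprime (Nat.card H) p) :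
    Function.Injective (fun h : H => ((dualAut (h : MulAut P) : MulAut (P →* ℂˣ)) :
        (P →* ℂˣ) → (P →* ℂˣ))) ∧
    (ActsIndecomposably (A := P →* ℂˣ)
        ((fun h : MulAut P => dualAut h) '' (H : Set (MulAut P))) ↔
      ActsIndecomposably (H : Set (MulAut P))) := by
  constructor
  · -- injectivity
    intro h₁ h₂ heq
    apply Subtype.ext
    have hsymm : ∀ x : P, (h₁ : MulAut P).symm x = (h₂ : MulAut P).symm x := by
      intro x
      have key : ∀ χ : P →* ℂˣ, χ ((h₁ : MulAut P).symm x) = χ ((h₂ : MulAut P).symm x) := by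
        intro χ
        have := DFunLike.congr_fun (congrFun heq χ) x
        exact this
      have : ((h₁ : MulAut P).symm x) * ((h₂ : MulAut P).symm x)⁻¹ = 1 := by
        apply eq_one_of_forall
        intro φ
        simp [map_mul, key φ]
      exact mul_inv_eq_one.mp this
    have : (h₁ : MulAut P).symm = (h₂ : MulAut P).symm := MulEquiv.ext hsymm
    calc (h₁ : MulAut P) = (h₁ : MulAut P).symm.symm := rfl
      _ = (h₂ : MulAut P).symm.symm := by rw [this]
      _ = (h₂ : MulAut P) := rfl
  · -- the indecomposability equivalence
    have hclosH : ∀ f ∈ (H : Set (MulAut P)), f⁻¹ ∈ (H : Set (MulAut P)) :=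
      fun f hf => H.inv_mem hf
    constructor
    · -- Indec on Irr(P) → Indec on P
      intro hIrr
      by_contra hnot
      exact dual_decomp hclosH hnot hIrr
    · -- Indec on P → Indec on Irr(P)
      intro hPdec
      by_contra hnotIrr
      -- dualize once more
      have hclosS : ∀ f ∈ ((fun h : MulAut P => dualAut h) '' (H : Set (MulAut P))),
          f⁻¹ ∈ ((fun h : MulAut P => dualAut h) '' (H : Set (MulAut P))) := by
        rintro f ⟨h, hh, rfl⟩
        exact ⟨h⁻¹, H.inv_mem hh, dualAut_inv h⟩
      have hnot2 := dual_decomp hclosS hnotIrr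
      -- transfer back along the double-dual isomorphism
      refine transfer_decomp (MulEquiv.ofBijective (evalHom P) evalHom_bijective)
        (H : Set (MulAut P)) _ ?_ hnot2 hPdec
      intro f hf
      refine ⟨dualAut (dualAut f), ⟨dualAut f, ⟨f, hf, rfl⟩, rfl⟩, ?_⟩
      intro x
      rfl
end

section
/- Let P be a finite abelian p-group and H an abelian subgroup of Aut(P) whose order is coprime to p. Let ψ ∈ Aut(P) be an automorphism commuting with every element of H and such that for every x ∈ P there exists h ∈ H (possibly depending on x) with ψ(x) = h(x). Then ψ ∈ H. -/
/-!
Put `S = {ψ h⁻¹ | h ∈ H}`: pairwise commuting automorphisms whose orders divide `|H|`, hence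
are prime to the orders of the elements of `P`, and every `x ∈ P` is fixed by one of them; it
suffices to show `1 ∈ S`. For `k ∈ S` the map `x ↦ k x / x` is an endomorphism whose kernel
`C` (the fixed points of `k`) meets its image `D` trivially by coprimality, hence `P = C × D`, and
both factors are invariant under `S`. If `k ≠ 1` fixes some `x ≠ 1`, both factors are proper.
Induction on `D`, applied to the elements of `S` fixing a given `c ∈ C`, shows that each `c ∈ C`
is fixed by an element of `S` acting trivially on `D`; induction on `C`, applied to those
elements, yields an element of `S` acting trivially on both.
-/

open Subgroup Set

theorem Subgroup.card_lt_card_of_lt {G : Type*} [Group G] {H K : Subgroup G} [Finite K]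
    (h : H < K) : Nat.card H < Nat.card K :=
  (card_le_of_le h.le).lt_of_ne fun hc => h.ne (eq_of_le_of_card_ge h.le hc.ge)

theorem MonoidHom.inf_ker_sup_map_eq_self {G : Type*} [Group G] [Finite G] {f : G →* G}
    (hf : f.ker ⊓ f.range = ⊥) {Q : Subgroup G} (hQ : Q.map f ≤ Q) :
    Q ⊓ f.ker ⊔ Q.map f = Q := by
  refine le_antisymm (sup_le inf_le_left hQ) fun x hx => ?_
  have hinj : InjOn f (Q.map f) := fun a ha b hb hab => by
    have hab' : a * b⁻¹ ∈ f.ker ⊓ f.range :=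
      mem_inf.mpr ⟨by simp [hab], mul_mem (map_le_range f Q ha) (inv_mem (map_le_range f Q hb))⟩
    rwa [hf, mem_bot, mul_inv_eq_one] at hab'
  have hmaps : MapsTo f (Q.map f) (Q.map f) := fun y hy => mem_map_of_mem f (hQ hy)
  obtain ⟨y, hy, hxy⟩ :=
    ((toFinite _).injOn_iff_bijOn_of_mapsTo hmaps).mp hinj |>.surjOn (mem_map_of_mem f hx)
  rw [← inv_mul_cancel_right x y]
  exact mul_mem_sup (mem_inf.mpr ⟨mul_mem hx (inv_mem (hQ hy)), by simp [hxy]⟩) hy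

namespace MulAut

section Group

variable {G : Type*} [Group G]

theorem apply_eq_and_apply_eq_of_apply_mul_eq {A B : Subgroup G} (hAB : A ⊓ B = ⊥)
    {g : MulAut G} (hA : MapsTo g A A) (hB : MapsTo g B B) {a b : G}
    (ha : a ∈ A) (hb : b ∈ B) (h : g (a * b) = a * b) : g a = a ∧ g b = b := by
  rw [map_mul] at h
  have hdiff : a⁻¹ * g a = b * (g b)⁻¹ := by
    rw [inv_mul_eq_iff_eq_mul, ← mul_assoc, ← h, mul_inv_cancel_right]
  have hmem : a⁻¹ * g a ∈ A ⊓ B :=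
    mem_inf.mpr ⟨mul_mem (inv_mem ha) (hA ha), hdiff ▸ mul_mem hb (inv_mem (hB hb))⟩
  rw [hAB, mem_bot, inv_mul_eq_one, eq_comm] at hmem
  rw [hmem] at h
  exact ⟨hmem, mul_left_cancel h⟩

theorem pow_apply_eq_pow_apply {ψ h : MulAut G} (hc : Commute ψ h) {x : G} (hx : ψ x = h x)
    (n : ℕ) : (ψ ^ n) x = (h ^ n) x := by
  induction n with
  | zero => rfl
  | succ n ih =>
    rw [pow_succ', mul_apply, ih, ← mul_apply, (hc.pow_right n).eq, mul_apply, hx, ← mul_apply,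
      ← pow_succ]

theorem pow_card_eq_one_of_forall_exists_apply_eq {H : Subgroup (MulAut G)} {ψ : MulAut G}
    (hcomm : ∀ h ∈ H, Commute ψ h) (hloc : ∀ x : G, ∃ h ∈ H, ψ x = h x) :
    ψ ^ Nat.card H = 1 := by
  ext x
  obtain ⟨h, hh, hx⟩ := hloc x
  rw [pow_apply_eq_pow_apply (hcomm h hh) hx,
    orderOf_dvd_iff_pow_eq_one.mp (Subgroup.orderOf_dvd_natCard H hh), one_apply]

end Group

section CommGroup

variable {G : Type*} [CommGroup G]

def commutatorHom (k : MulAut G) : G →* G := k.toMonoidHom / MonoidHom.id G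

@[simp]
theorem commutatorHom_apply (k : MulAut G) (x : G) : commutatorHom k x = k x / x := rfl

theorem mem_ker_commutatorHom {k : MulAut G} {x : G} :
    x ∈ (commutatorHom k).ker ↔ k x = x := by
  rw [MonoidHom.mem_ker, commutatorHom_apply, div_eq_one]

theorem commutatorHom_apply_apply {g k : MulAut G} (hgk : Commute g k) (x : G) :
    commutatorHom k (g x) = g (commutatorHom k x) := by
  rw [commutatorHom_apply, commutatorHom_apply, map_div, ← mul_apply, ← hgk.eq, mul_apply]

theorem mapsTo_inf_ker_commutatorHom {g k : MulAut G} (hgk : Commute g k) {Q : Subgroup G}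
    (hQ : MapsTo g Q Q) :
    MapsTo g (Q ⊓ (commutatorHom k).ker : Subgroup G)
      (Q ⊓ (commutatorHom k).ker : Subgroup G) := by
  intro x hx
  obtain ⟨hxQ, hxk⟩ := mem_inf.mp hx
  refine mem_inf.mpr ⟨hQ hxQ, ?_⟩
  rw [MonoidHom.mem_ker] at hxk ⊢
  rw [commutatorHom_apply_apply hgk, hxk, map_one]

theorem mapsTo_map_commutatorHom {g k : MulAut G} (hgk : Commute g k) {Q : Subgroup G}
    (hQ : MapsTo g Q Q) :
    MapsTo g (Q.map (commutatorHom k) : Subgroup G) (Q.map (commutatorHom k) : Subgroup G) := by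
  rintro _ ⟨x, hx, rfl⟩
  exact ⟨g x, hQ hx, commutatorHom_apply_apply hgk x⟩

theorem ker_commutatorHom_inf_range_eq_bot {k : MulAut G}
    (hk : ∀ x : G, (orderOf x).Coprime (orderOf k)) :
    (commutatorHom k).ker ⊓ (commutatorHom k).range = ⊥ := by
  refine eq_bot_iff.mpr fun x hx => mem_bot.mpr ?_
  obtain ⟨hker, z, hz⟩ := mem_inf.mp hx
  rw [mem_ker_commutatorHom] at hker
  rw [commutatorHom_apply, div_eq_iff_eq_mul] at hz
  have hpow : ∀ n : ℕ, (k ^ n) z = x ^ n * z := by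
    intro n
    induction n with
    | zero => simp
    | succ n ih =>
      rw [pow_succ', mul_apply, ih, map_mul, hz, map_pow, hker, pow_succ, mul_assoc]
  have hxN : x ^ orderOf k = 1 := by
    simpa [pow_orderOf_eq_one] using hpow (orderOf k)
  exact orderOf_eq_one_iff.mp ((hk x).eq_one_of_dvd (orderOf_dvd_of_pow_eq_one hxN))

theorem exists_mem_forall_apply_eq_sup_of_inf_eq_bot {C D : Subgroup G} (S : Set (MulAut G))
    (hCD : C ⊓ D = ⊥) (hC : ∀ g ∈ S, MapsTo g C C) (hD : ∀ g ∈ S, MapsTo g D D)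
    (hcover : ∀ x ∈ C ⊔ D, ∃ g ∈ S, g x = x)
    (ihC : ∀ T ⊆ S, (∀ x ∈ C, ∃ g ∈ T, g x = x) → ∃ g ∈ T, ∀ x ∈ C, g x = x)
    (ihD : ∀ T ⊆ S, (∀ x ∈ D, ∃ g ∈ T, g x = x) → ∃ g ∈ T, ∀ x ∈ D, g x = x) :
    ∃ g ∈ S, ∀ x ∈ C ⊔ D, g x = x := by
  have hfixD : ∀ c ∈ C, ∃ g ∈ S, g c = c ∧ ∀ d ∈ D, g d = d := by
    intro c hc
    obtain ⟨g, ⟨hgS, hgc⟩, hgD⟩ := ihD {g ∈ S | g c = c} (sep_subset _ _) fun d hd => by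
      obtain ⟨g, hgS, hg⟩ := hcover (c * d) (mul_mem_sup hc hd)
      obtain ⟨hgc, hgd⟩ :=
        apply_eq_and_apply_eq_of_apply_mul_eq hCD (hC g hgS) (hD g hgS) hc hd hg
      exact ⟨g, ⟨hgS, hgc⟩, hgd⟩
    exact ⟨g, hgS, hgc, hgD⟩
  obtain ⟨g, ⟨hgS, hgD⟩, hgC⟩ := ihC {g ∈ S | ∀ d ∈ D, g d = d} (sep_subset _ _)
    fun c hc => by
      obtain ⟨g, hgS, hgc, hgD⟩ := hfixD c hc
      exact ⟨g, ⟨hgS, hgD⟩, hgc⟩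
  refine ⟨g, hgS, fun x hx => ?_⟩
  obtain ⟨c, hc, d, hd, rfl⟩ := mem_sup.mp hx
  rw [map_mul, hgC c hc, hgD d hd]

theorem exists_mem_forall_apply_eq_of_forall_exists [Finite G] (Q : Subgroup G)
    (S : Set (MulAut G)) (hcomm : ∀ g ∈ S, ∀ g' ∈ S, Commute g g')
    (hcop : ∀ g ∈ S, ∀ x : G, (orderOf x).Coprime (orderOf g))
    (hQ : ∀ g ∈ S, MapsTo g Q Q) (hcover : ∀ x ∈ Q, ∃ g ∈ S, g x = x) :
    ∃ g ∈ S, ∀ x ∈ Q, g x = x := by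
  induction hn : Nat.card Q using Nat.strong_induction_on generalizing Q S with
  | _ n ih =>
  subst hn
  obtain hQbot | ⟨x₀, hx₀Q, hx₀⟩ := Q.bot_or_exists_ne_one
  · obtain ⟨g, hg, -⟩ := hcover 1 Q.one_mem
    exact ⟨g, hg, fun x hx => by rw [hQbot, mem_bot] at hx; rw [hx, map_one]⟩
  obtain ⟨k, hkS, hkx₀⟩ := hcover x₀ hx₀Q
  by_cases hk : ∀ x ∈ Q, k x = x
  · exact ⟨k, hkS, hk⟩
  push Not at hk
  obtain ⟨x₁, hx₁Q, hkx₁⟩ := hk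
  set f := commutatorHom k
  have hdisj := ker_commutatorHom_inf_range_eq_bot (hcop k hkS)
  have hfQ : Q.map f ≤ Q := by
    rintro _ ⟨x, hx, rfl⟩
    exact div_mem (hQ k hkS hx) hx
  set C := Q ⊓ f.ker
  set D := Q.map f
  have hCD : C ⊓ D = ⊥ :=
    eq_bot_iff.mpr <| hdisj ▸ inf_le_inf inf_le_right (map_le_range f Q)
  have hC : ∀ g ∈ S, MapsTo g C C := fun g hg =>
    mapsTo_inf_ker_commutatorHom (hcomm g hg k hkS) (hQ g hg)
  have hD : ∀ g ∈ S, MapsTo g D D := fun g hg =>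
    mapsTo_map_commutatorHom (hcomm g hg k hkS) (hQ g hg)
  have hCQ : C < Q := SetLike.lt_iff_le_and_exists.mpr
    ⟨inf_le_left, x₁, hx₁Q, fun h => hkx₁ (mem_ker_commutatorHom.mp h.2)⟩
  have hx₀C : x₀ ∈ C := mem_inf.mpr ⟨hx₀Q, mem_ker_commutatorHom.mpr hkx₀⟩
  have hDQ : D < Q := SetLike.lt_iff_le_and_exists.mpr
    ⟨hfQ, x₀, hx₀Q, fun h => hx₀ (mem_bot.mp (hCD ▸ mem_inf.mpr ⟨hx₀C, h⟩))⟩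
  have ih' : ∀ R < Q, (∀ g ∈ S, MapsTo g R R) →
      ∀ T ⊆ S, (∀ x ∈ R, ∃ g ∈ T, g x = x) → ∃ g ∈ T, ∀ x ∈ R, g x = x :=
    fun R hRQ hR T hT hcov => ih _ (card_lt_card_of_lt hRQ) R T
      (fun g hg g' hg' => hcomm g (hT hg) g' (hT hg')) (fun g hg => hcop g (hT hg))
      (fun g hg => hR g (hT hg)) hcov rfl
  rw [← f.inf_ker_sup_map_eq_self hdisj hfQ] at hcover ⊢
  exact exists_mem_forall_apply_eq_sup_of_inf_eq_bot S hCD hC hD hcover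
    (ih' C hCQ hC) (ih' D hDQ hD)

theorem mem_of_forall_exists_apply_eq [Finite G] {H : Subgroup (MulAut G)}
    (hH : ∀ a ∈ H, ∀ b ∈ H, Commute a b)
    (hcop : ∀ x : G, (orderOf x).Coprime (Nat.card H)) {ψ : MulAut G}
    (hcomm : ∀ h ∈ H, Commute ψ h) (hloc : ∀ x : G, ∃ h ∈ H, ψ x = h x) : ψ ∈ H := by
  have hψ := pow_card_eq_one_of_forall_exists_apply_eq hcomm hloc
  set S := (fun h => ψ * h⁻¹) '' H
  have hScomm : ∀ g ∈ S, ∀ g' ∈ S, Commute g g' := by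
    rintro _ ⟨h, hh, rfl⟩ _ ⟨h', hh', rfl⟩
    exact ((Commute.refl ψ).mul_right (hcomm h' hh').inv_right).mul_left
      ((hcomm h hh).inv_right.symm.mul_right (hH h hh h' hh').inv_inv)
  have hScop : ∀ g ∈ S, ∀ x : G, (orderOf x).Coprime (orderOf g) := by
    rintro _ ⟨h, hh, rfl⟩ x
    have hpow : (ψ * h⁻¹) ^ Nat.card H = 1 := by
      rw [(hcomm h hh).inv_right.mul_pow, hψ, inv_pow,
        orderOf_dvd_iff_pow_eq_one.mp (Subgroup.orderOf_dvd_natCard H hh), inv_one, one_mul]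
    exact (hcop x).coprime_dvd_right (orderOf_dvd_of_pow_eq_one hpow)
  have hScover : ∀ x ∈ (⊤ : Subgroup G), ∃ g ∈ S, g x = x := fun x _ => by
    obtain ⟨h, hh, hx⟩ := hloc x
    refine ⟨ψ * h⁻¹, ⟨h, hh, rfl⟩, ?_⟩
    rw [(hcomm h hh).inv_right.eq, mul_apply, hx, inv_apply_self]
  obtain ⟨_, ⟨h, hh, rfl⟩, hfix⟩ := exists_mem_forall_apply_eq_of_forall_exists ⊤ S
    hScomm hScop (fun _ _ => mapsTo_univ _ _) hScover
  rwa [mul_inv_eq_one.mp (MulEquiv.ext fun x => hfix x (mem_top x))]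

end CommGroup

end MulAut

theorem stmt9_general (p : ℕ) (P : Type) [CommGroup P] [Finite P]
    (hP : IsPGroup p P) (H : Subgroup (MulAut P))
    (hab : ∀ a ∈ H, ∀ b ∈ H, a * b = b * a)
    (hcop : Nat.Coprime (Nat.card H) p)
    (ψ : MulAut P) (hcomm : ∀ h ∈ H, ψ * h = h * ψ)
    (hloc : ∀ x : P, ∃ h ∈ H, ψ x = h x) :
    ψ ∈ H :=
  MulAut.mem_of_forall_exists_apply_eq hab (hP.orderOf_coprime hcop.symm) hcomm hloc

/-- Let `P` be a finite abelian `p`-group and `H` an abelian subgroup of `Aut(P)` whose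
order is coprime to `p`.  Let `ψ ∈ Aut(P)` be an automorphism commuting with every element
of `H` and such that for every `x ∈ P` there exists `h ∈ H` (possibly depending on `x`)
with `ψ(x) = h(x)`.  Then `ψ ∈ H`. -/
theorem stmt9 (p : ℕ) (hp : p.Prime) (P : Type) [CommGroup P] [Finite P]
    (hP : IsPGroup p P) (H : Subgroup (MulAut P))
    (hab : ∀ a ∈ H, ∀ b ∈ H, a * b = b * a)
    (hcop : Nat.Coprime (Nat.card H) p)
    (ψ : MulAut P) (hcomm : ∀ h ∈ H, ψ * h = h * ψ)
    (hloc : ∀ x : P, ∃ h ∈ H, ψ x = h x) :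
    ψ ∈ H :=
  stmt9_general p P hP H hab hcop ψ hcomm hloc
end

section
/- Let V be an n-dimensional vector space over a field F (n a positive natural number), and let (V_i)_{i∈I} be a family of subspaces of V, each of codimension one, such that ⋂_{i∈I} V_i = {0}. Then there exists a subset {i₁, …, i_n} ⊆ I of n indices such that ⋂_{j=1}^n V_{i_j} = {0}. Furthermore, setting U_l := ⋂_{j≠l, 1≤j≤n} V_{i_j} for each 1 ≤ l ≤ n, each U_l is one-dimensional and V is the internal direct sum of U₁, …, U_n. -/
open Module

/-!
Intersecting with a hyperplane that does not contain the current intersection lowers its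
dimension, so some `n` of the `V_i` already meet in `0`; as a hyperplane lowers the dimension
by at most one, no fewer than `n` of them can. Hence `U_l` has dimension at least `1`, and it
meets `V_{i_l}` trivially, so it is a line. For `k ≠ l` the line `U_k` lies in `V_{i_l}`, which
makes the `U_l` independent, and `n` independent lines span the `n`-dimensional space.
-/

theorem exists_inf_lt_of_iInf_eq_bot {α ι : Type*} [CompleteLattice α] {p : ι → α}
    (hp : ⨅ i, p i = ⊥) {a : α} (ha : a ≠ ⊥) : ∃ i, a ⊓ p i < a := by
  by_contra! h
  refine ha (eq_bot_iff.mpr (hp ▸ le_iInf fun i => inf_eq_left.mp ?_))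
  by_contra hne
  exact h i (inf_le_left.lt_of_ne hne)

theorem iInf_ne_inf_eq_iInf {α ι : Type*} [CompleteLattice α] (p : ι → α) (l : ι) :
    (⨅ j, ⨅ _ : j ≠ l, p j) ⊓ p l = ⨅ j, p j := by
  rw [iInf_split_single p l, inf_comm]

theorem iSupIndep_iInf_ne {α ι : Type*} [CompleteLattice α] {p : ι → α}
    (hp : ⨅ i, p i = ⊥) : iSupIndep fun l => ⨅ j, ⨅ _ : j ≠ l, p j := by
  intro l
  have hle : ⨆ k, ⨆ _ : k ≠ l, ⨅ j, ⨅ _ : j ≠ k, p j ≤ p l :=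
    iSup₂_le fun k hk => iInf₂_le l hk.symm
  rw [disjoint_iff, ← le_bot_iff, ← hp, ← iInf_ne_inf_eq_iInf p l]
  exact inf_le_inf_left _ hle

namespace Submodule

variable {K V ι : Type*} [DivisionRing K] [AddCommGroup V] [Module K V] [FiniteDimensional K V]

theorem finrank_le_finrank_inf_add_one {H : Submodule K V} (hH : finrank K V ≤ finrank K H + 1)
    (W : Submodule K V) : finrank K W ≤ finrank K ↥(W ⊓ H) + 1 := by
  have := finrank_sup_add_finrank_inf_eq W H
  have := finrank_le (W ⊔ H)
  omega

theorem finrank_le_finrank_finsetInf_add_card {H : ι → Submodule K V}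
    (hH : ∀ i, finrank K V ≤ finrank K (H i) + 1) (s : Finset ι) :
    finrank K V ≤ finrank K ↥(s.inf H) + s.card := by
  classical
  induction s using Finset.induction_on with
  | empty => rw [Finset.inf_empty, finrank_top, Finset.card_empty, add_zero]
  | insert a s ha ih =>
    rw [Finset.inf_insert, Finset.card_insert_of_notMem ha, inf_comm]
    have := finrank_le_finrank_inf_add_one (hH a) (s.inf H)
    omega

theorem exists_finset_card_le_finrank_inf_eq_bot {p : ι → Submodule K V}
    (hp : ⨅ i, p i = ⊥) : ∃ s : Finset ι, s.card ≤ finrank K V ∧ s.inf p = ⊥ := by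
  classical
  suffices h : ∀ d (s : Finset ι), finrank K ↥(s.inf p) ≤ d →
      ∃ t : Finset ι, t.card ≤ s.card + d ∧ t.inf p = ⊥ by
    simpa using h (finrank K V) ∅ (by rw [Finset.inf_empty, finrank_top])
  intro d
  induction d with
  | zero => exact fun s hs => ⟨s, le_rfl, finrank_eq_zero.mp (Nat.le_zero.mp hs)⟩
  | succ d ih =>
    intro s hs
    by_cases hbot : s.inf p = ⊥
    · exact ⟨s, by omega, hbot⟩
    obtain ⟨i, hi⟩ := exists_inf_lt_of_iInf_eq_bot hp hbot
    have hlt := finrank_lt_finrank_of_lt hi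
    obtain ⟨t, ht, htbot⟩ := ih (insert i s) (by rw [Finset.inf_insert, inf_comm]; omega)
    exact ⟨t, by have := s.card_insert_le i; omega, htbot⟩

theorem exists_fin_finrank_iInf_eq_bot {H : ι → Submodule K V}
    (hH : ∀ i, finrank K V ≤ finrank K (H i) + 1) (hbot : ⨅ i, H i = ⊥) :
    ∃ f : Fin (finrank K V) → ι, ⨅ j, H (f j) = ⊥ := by
  obtain ⟨s, hs, hsbot⟩ := exists_finset_card_le_finrank_inf_eq_bot hbot
  have hcard : Fintype.card s = finrank K V := by
    have := finrank_le_finrank_finsetInf_add_card hH s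
    rw [hsbot, finrank_bot] at this
    simp only [Fintype.card_coe]
    omega
  let e : Fin (finrank K V) ≃ s := (Fintype.equivFinOfCardEq hcard).symm
  refine ⟨fun j => e j, ?_⟩
  rw [← hsbot, Finset.inf_eq_iInf, e.iInf_comp (g := fun i : s => H i)]
  exact iInf_subtype'' _ _

theorem finrank_iInf_ne_eq_one [Fintype ι] {H : ι → Submodule K V}
    (hH : ∀ i, finrank K V ≤ finrank K (H i) + 1) (hcard : Fintype.card ι = finrank K V)
    (hbot : ⨅ i, H i = ⊥) (l : ι) : finrank K ↥(⨅ j, ⨅ _ : j ≠ l, H j) = 1 := by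
  classical
  have hle : finrank K ↥(⨅ j, ⨅ _ : j ≠ l, H j) + finrank K (H l) ≤ finrank K V :=
    finrank_add_finrank_le_of_disjoint <| disjoint_iff.mpr <| (iInf_ne_inf_eq_iInf H l).trans hbot
  have hge := finrank_le_finrank_finsetInf_add_card hH (Finset.univ.erase l)
  have herase : (Finset.univ.erase l).inf H = ⨅ j, ⨅ _ : j ≠ l, H j := by
    simp [Finset.inf_eq_iInf]
  rw [herase, Finset.card_erase_of_mem (Finset.mem_univ l), Finset.card_univ, hcard] at hge
  have := hH l
  have : 0 < Fintype.card ι := Fintype.card_pos_iff.mpr ⟨l⟩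
  omega

theorem _root_.iSupIndep.iSup_eq_top_of_card_eq_finrank [Fintype ι] {U : ι → Submodule K V}
    (hU : iSupIndep U) (hne : ∀ i, U i ≠ ⊥) (hcard : Fintype.card ι = finrank K V) :
    ⨆ i, U i = ⊤ := by
  choose v hvU hv0 using fun i => (U i).ne_bot_iff.mp (hne i)
  have hspan := (hU.linearIndependent U hvU hv0).span_eq_top_of_card_eq_finrank' hcard
  rw [eq_top_iff, ← hspan, span_range_eq_iSup]
  exact iSup_mono fun i => (span_singleton_le_iff_mem _ _).mpr (hvU i)

end Submodule

theorem stmt10_general (F : Type) [Field F] (V : Type) [AddCommGroup V] [Module F V]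
    [FiniteDimensional F V] (n : ℕ) (hdim : finrank F V = n)
    (I : Type) (Vi : I → Submodule F V)
    (hcodim : ∀ i : I, finrank F (Vi i) = n - 1)
    (hint : ⨅ i : I, Vi i = ⊥) :
    ∃ f : Fin n → I,
      (⨅ j : Fin n, Vi (f j)) = ⊥ ∧
      (∀ l : Fin n,
        finrank F (⨅ j : Fin n, ⨅ _ : j ≠ l, Vi (f j) : Submodule F V) = 1) ∧
      DirectSum.IsInternal (fun l : Fin n => ⨅ j : Fin n, ⨅ _ : j ≠ l, Vi (f j)) := by
  subst hdim
  have hV (i : I) : finrank F V ≤ finrank F (Vi i) + 1 := by rw [hcodim i]; omega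
  obtain ⟨f, hf⟩ := Submodule.exists_fin_finrank_iInf_eq_bot hV hint
  have hrank := Submodule.finrank_iInf_ne_eq_one (fun j => hV (f j)) (Fintype.card_fin _) hf
  have hindep := iSupIndep_iInf_ne hf
  refine ⟨f, hf, hrank, DirectSum.isInternal_submodule_of_iSupIndep_of_iSup_eq_top hindep ?_⟩
  exact hindep.iSup_eq_top_of_card_eq_finrank
    (fun l hl => one_ne_zero <| (hrank l).symm.trans (Submodule.finrank_eq_zero.mpr hl))
    (Fintype.card_fin _)

/-- Let `V` be an `n`-dimensional vector space over a field `F` (`n` a positive natural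
number), and let `(V_i)_{i ∈ I}` be a family of subspaces of `V`, each of codimension one,
such that `⋂_{i ∈ I} V_i = {0}`.  Then there exist `n` indices `i₁, …, iₙ ∈ I` such that
`⋂_{j=1}^n V_{i_j} = {0}`.  Furthermore, setting `U_l := ⋂_{j ≠ l} V_{i_j}` for each
`1 ≤ l ≤ n`, each `U_l` is one-dimensional and `V` is the internal direct sum of
`U₁, …, Uₙ`. -/
theorem stmt10 (F : Type) [Field F] (V : Type) [AddCommGroup V] [Module F V]
    [FiniteDimensional F V] (n : ℕ) (hn : 0 < n) (hdim : finrank F V = n)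
    (I : Type) (Vi : I → Submodule F V)
    (hcodim : ∀ i : I, finrank F (Vi i) = n - 1)
    (hint : ⨅ i : I, Vi i = ⊥) :
    ∃ f : Fin n → I,
      (⨅ j : Fin n, Vi (f j)) = ⊥ ∧
      (∀ l : Fin n,
        finrank F (⨅ j : Fin n, ⨅ _ : j ≠ l, Vi (f j) : Submodule F V) = 1) ∧
      DirectSum.IsInternal (fun l : Fin n => ⨅ j : Fin n, ⨅ _ : j ≠ l, Vi (f j)) :=
  stmt10_general F V n hdim I Vi hcodim hint
end

section
/- With the notation of the context, let λ : G → ℂˣ be a group homomorphism whose kernel contains the subgroup D ⋊ F₀, and let χ be an irreducible complex character of G such that χ(z) ≠ χ(1) (where z is viewed as a central element of G). Then λ·χ = χ, i.e. the product character g ↦ λ(g)χ(g) equals χ. -/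
/-- A function `χ : G → ℂ` is an irreducible (complex) character of `G` if it is the
character of some irreducible (i.e. simple) finite-dimensional complex representation
of `G`. -/
def IsIrredCharacter {G : Type} [Group G] (χ : G → ℂ) : Prop :=
  ∃ V : FDRep ℂ G, CategoryTheory.Simple V ∧ ∀ g : G, V.character g = χ g

/-! If the `E`-part of `a` lies in `F₀` then `λ a = 1`. Otherwise it is `g ^ j * f` with
`f ∈ F₀` and `ℓ ∤ j`. Since `h` centralises `F₀` and `h g h⁻¹ = g z`, conjugation by `h` turns
it into `z ^ j * g ^ j * f`; and `g ^ j * f` scales the second axis of `D` by `ω ^ j * v` with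
`v ^ ℓ = 1`, which is not `1`, so a translation along that axis repairs the `D`-part. Hence `a`
is conjugate to `z ^ j * a`. As `z` acts on the irreducible representation by a scalar of order
`ℓ`, `χ a` is a multiple of itself by a root of unity `≠ 1`, so `χ a = 0`. -/

open CategoryTheory Multiplicative

universe u

namespace FDRep

variable {k G : Type u} [Field k] [IsAlgClosed k] [Group G]

theorem exists_ρ_eq_smul_id_of_mem_center (V : FDRep k G) [Simple V] {c : G}
    (hc : c ∈ Subgroup.center G) : ∃ ζ : k, V.ρ c = ζ • LinearMap.id := by
  let f : V ⟶ V := Action.Hom.mk (FGModuleCat.ofHom (V.ρ c)) fun x => by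
    ext v
    change V.ρ c (V.ρ x v) = V.ρ x (V.ρ c v)
    rw [← Module.End.mul_apply, ← map_mul, ← Subgroup.mem_center_iff.mp hc x, map_mul,
      Module.End.mul_apply]
  obtain ⟨ζ, hζ⟩ := endomorphism_simple_eq_smul_id k f
  refine ⟨ζ, LinearMap.ext fun v => ?_⟩
  have := congrArg (fun φ : V ⟶ V => φ.hom v) hζ
  rw [Action.smul_hom] at this
  simp only [f] at this
  exact this.symm

theorem character_eq_zero_of_isConj_mul (V : FDRep k G) [Simple V] {c a : G}
    (hc : c ∈ Subgroup.center G) (hρc : V.ρ c ≠ 1) (hconj : IsConj a (c * a)) :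
    V.character a = 0 := by
  obtain ⟨ζ, hζ⟩ := V.exists_ρ_eq_smul_id_of_mem_center hc
  have hζ1 : ζ ≠ 1 := by
    rintro rfl
    exact hρc (by rw [hζ, one_smul]; rfl)
  obtain ⟨x, hx⟩ := isConj_iff.mp hconj
  have hca : V.character (c * a) = ζ * V.character a := by
    rw [FDRep.character, map_mul, hζ, smul_mul_assoc, ← Module.End.one_eq_id, one_mul,
      map_smul, smul_eq_mul, FDRep.character]
  have : (ζ - 1) * V.character a = 0 := by
    linear_combination V.char_conj a x - hca - congrArg V.character hx
  exact (mul_eq_zero.mp this).resolve_left (sub_ne_zero.mpr hζ1)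

end FDRep

section ConjByH

variable {E : Type*} [Group E] {z g h : E}

theorem conj_zpow_eq_zpow_mul_zpow (hgz : Commute g z) (hrel : h * g * h⁻¹ = g * z) (k : ℤ) :
    h * g ^ k * h⁻¹ = g ^ k * z ^ k := by
  simpa [hrel, hgz.mul_zpow] using map_zpow (MulAut.conj h) g k

variable (hzcent : ∀ e : E, z * e = e * z) (hrel : h * g * h⁻¹ = g * z)
include hzcent hrel

theorem closure_le_centralizer {ℓ : ℕ} (hzℓ : z ^ ℓ = 1) :
    Subgroup.closure {z, g ^ ℓ, h} ≤ Subgroup.centralizer {h} := by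
  rw [Subgroup.closure_le]
  rintro x (rfl | rfl | rfl) <;> rw [SetLike.mem_coe, Subgroup.mem_centralizer_singleton_iff]
  · exact hzcent h
  · have := conj_zpow_eq_zpow_mul_zpow (hzcent g).symm hrel ℓ
    rw [zpow_natCast, zpow_natCast, hzℓ, mul_one] at this
    exact (mul_inv_eq_iff_eq_mul.mp this).symm

theorem conj_pow_mul_eq_of_mem_closure {ℓ : ℕ} (hzℓ : z ^ ℓ = 1) {f : E}
    (hf : f ∈ Subgroup.closure {z, g ^ ℓ, h}) (j : ℕ) :
    h * (g ^ j * f) * h⁻¹ = z ^ j * (g ^ j * f) := by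
  have hfh : f * h = h * f :=
    Subgroup.mem_centralizer_singleton_iff.mp (closure_le_centralizer hzcent hrel hzℓ hf)
  have hgj := conj_zpow_eq_zpow_mul_zpow (hzcent g).symm hrel j
  rw [zpow_natCast, zpow_natCast] at hgj
  calc h * (g ^ j * f) * h⁻¹ = (h * g ^ j * h⁻¹) * (h * f * h⁻¹) := by group
    _ = g ^ j * z ^ j * f := by rw [hgj, ← hfh]; group
    _ = z ^ j * g ^ j * f := by rw [(Commute.pow_pow (hzcent g) j j).eq]
    _ = z ^ j * (g ^ j * f) := mul_assoc _ _ _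

theorem zpowers_le_normalizer_closure (ℓ : ℕ) :
    Subgroup.zpowers g ≤ Subgroup.normalizer (Subgroup.closure {z, g ^ ℓ, h} : Set E) := by
  rw [Subgroup.le_normalizer_closure_iff]
  rintro _ ⟨k, rfl⟩ x (rfl | rfl | hx) <;> simp only
  · rw [← hzcent]; group; exact Subgroup.subset_closure (by simp)
  · group; exact Subgroup.subset_closure (by simp)
  · rw [Set.mem_singleton_iff.mp hx]
    have hconj : g ^ k * h * (g ^ k)⁻¹ = z ^ (-k) * h := by
      calc g ^ k * h * (g ^ k)⁻¹ = g ^ k * (h * g ^ (-k) * h⁻¹) * h := by group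
        _ = z ^ (-k) * h := by
          rw [conj_zpow_eq_zpow_mul_zpow (hzcent g).symm hrel]; group
    rw [hconj]
    exact Subgroup.mul_mem _ (Subgroup.zpow_mem _ (Subgroup.subset_closure (by simp)) _)
      (Subgroup.subset_closure (by simp))

theorem exists_pow_mul_eq_of_notMem_closure (hgen : Subgroup.closure {z, g, h} = ⊤)
    (hg : IsOfFinOrder g) {ℓ : ℕ} {e : E} (he : e ∉ Subgroup.closure {z, g ^ ℓ, h}) :
    ∃ j : ℕ, ¬ ℓ ∣ j ∧ ∃ f ∈ Subgroup.closure {z, g ^ ℓ, h}, g ^ j * f = e := by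
  set F₀ := Subgroup.closure {z, g ^ ℓ, h}
  have hsup : Subgroup.zpowers g ⊔ F₀ = ⊤ := by
    rw [eq_top_iff, ← hgen, Subgroup.closure_le]
    rintro x (rfl | rfl | rfl)
    · exact Subgroup.mem_sup_right (Subgroup.subset_closure (by simp))
    · exact Subgroup.mem_sup_left (Subgroup.mem_zpowers x)
    · exact Subgroup.mem_sup_right (Subgroup.subset_closure (by simp))
  have hmem : e ∈ (↑(Subgroup.zpowers g ⊔ F₀) : Set E) := by rw [hsup]; trivial
  rw [Subgroup.coe_mul_of_left_le_normalizer_right _ _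
    (zpowers_le_normalizer_closure hzcent hrel ℓ)] at hmem
  obtain ⟨_, hx, f, hf, rfl⟩ := hmem
  obtain ⟨j, rfl⟩ := hg.mem_powers_iff_mem_zpowers.mpr hx
  refine ⟨j, fun ⟨i, hi⟩ => he ?_, f, hf, rfl⟩
  beta_reduce
  rw [hi, pow_mul]
  exact F₀.mul_mem (F₀.pow_mem (Subgroup.subset_closure (by simp)) i) hf

end ConjByH

section SecondAxis

variable {R : Type*} [Semiring R]

def ScalesSecondAxis (a : MulAut (Multiplicative (R × R))) (v : R) : Prop :=
  ∀ y : R, a (ofAdd (0, y)) = ofAdd (0, v * y)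

namespace ScalesSecondAxis

variable {a b : MulAut (Multiplicative (R × R))} {v w : R}

theorem one : ScalesSecondAxis (1 : MulAut (Multiplicative (R × R))) 1 := fun y => by
  rw [one_mul]; rfl

theorem mul (ha : ScalesSecondAxis a v) (hb : ScalesSecondAxis b w) :
    ScalesSecondAxis (a * b) (v * w) := fun y => by
  rw [MulAut.mul_apply, hb, ha, mul_assoc]

theorem pow (ha : ScalesSecondAxis a v) (n : ℕ) : ScalesSecondAxis (a ^ n) (v ^ n) := by
  induction n with
  | zero => simpa using one
  | succ n ih => simpa [pow_succ] using ih.mul ha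

theorem inv {v : Rˣ} (ha : ScalesSecondAxis a v) : ScalesSecondAxis a⁻¹ ↑v⁻¹ := fun y => by
  apply a.injective
  rw [MulAut.apply_inv_self, ha, ← mul_assoc, Units.mul_inv, one_mul]

end ScalesSecondAxis

def secondAxisScalings (U : Subgroup Rˣ) : Subgroup (MulAut (Multiplicative (R × R))) where
  carrier := {a | ∃ v ∈ U, ScalesSecondAxis a v}
  one_mem' := ⟨1, U.one_mem, ScalesSecondAxis.one⟩
  mul_mem' := fun ⟨v, hv, ha⟩ ⟨w, hw, hb⟩ => ⟨v * w, U.mul_mem hv hw, ha.mul hb⟩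
  inv_mem' := fun ⟨v, hv, ha⟩ => ⟨v⁻¹, U.inv_mem hv, ha.inv⟩

end SecondAxis

theorem isConj_inr_mul_of_scalesSecondAxis {𝔽 E : Type*} [Field 𝔽] [Group E]
    {φ : E →* MulAut (Multiplicative (𝔽 × 𝔽))} {c h : E} {t u : 𝔽}
    (a : Multiplicative (𝔽 × 𝔽) ⋊[φ] E) (hc : φ c = 1) (hconj : h * a.right * h⁻¹ = c * a.right)
    (hh : ∀ d : 𝔽 × 𝔽, φ h (ofAdd d) = ofAdd (d.1, t * d.2))
    (ha : ScalesSecondAxis (φ a.right) u) (hu : u ≠ 1) :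
    IsConj a (SemidirectProduct.inr c * a) := by
  obtain ⟨m, e⟩ := a
  obtain ⟨d, rfl⟩ : ∃ d : 𝔽 × 𝔽, ofAdd d = m := ⟨toAdd m, ofAdd_toAdd m⟩
  dsimp only at hconj ha
  -- the second coordinate of the `D`-part of the conjugate is `y + t * d.2 - u * y`
  set y := (1 - t) * d.2 / (1 - u)
  refine isConj_iff.mpr ⟨⟨ofAdd (0, y), h⟩, ?_⟩
  have hacts : φ (h * e) (φ h⁻¹ (ofAdd (0, y))⁻¹) = ofAdd (0, -(u * y)) := by
    rw [← MulAut.mul_apply, ← map_mul, hconj, map_mul, hc, one_mul, ← ofAdd_neg, Prod.neg_mk,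
      neg_zero, ha, mul_neg]
  have hy : (1 - u) * y = (1 - t) * d.2 := mul_div_cancel₀ _ (sub_ne_zero.mpr hu.symm)
  ext : 1
  · simp only [SemidirectProduct.mul_left, SemidirectProduct.mul_right,
      SemidirectProduct.inv_left, SemidirectProduct.left_inr, SemidirectProduct.right_inr, hacts,
      hc, hh, one_mul, MulAut.one_apply, ← ofAdd_add]
    congr 1
    ext
    · simp
    · simp only [Prod.snd_add]
      linear_combination hy
  · simp only [SemidirectProduct.mul_right, SemidirectProduct.inv_right,
      SemidirectProduct.right_inr]
    exact hconj

theorem SemidirectProduct.inr_mem_center {N G : Type*} [Group N] [Group G]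
    {φ : G →* MulAut N} {c : G} (hc : c ∈ Subgroup.center G) (hφc : φ c = 1) :
    SemidirectProduct.inr c ∈ Subgroup.center (N ⋊[φ] G) :=
  Subgroup.mem_center_iff.mpr fun x => by
    ext : 1
    · simp [hφc]
    · simp [Subgroup.mem_center_iff.mp hc x.right]

theorem pow_ne_one_of_not_dvd {M : Type*} [Monoid M] {x : M} {p j : ℕ} (hp : p.Prime)
    (hxp : x ^ p = 1) (hx : x ≠ 1) (hj : ¬ p ∣ j) : x ^ j ≠ 1 := by
  have := Fact.mk hp
  exact fun hxj => hj (orderOf_eq_prime hxp hx ▸ orderOf_dvd_of_pow_eq_one hxj)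

section Scalings

variable {𝔽 E : Type*} [Field 𝔽] [Group E] {φ : E →* MulAut (Multiplicative (𝔽 × 𝔽))}
  {z g h : E} {ω : 𝔽} {ℓ : ℕ}

theorem closure_le_comap_secondAxisScalings (hℓ : 0 < ℓ) (hω : IsPrimitiveRoot ω (ℓ ^ 2))
    (hφz : φ z = 1) (hφg : ScalesSecondAxis (φ g) ω) (hφh : ScalesSecondAxis (φ h) (ω⁻¹ ^ ℓ)) :
    Subgroup.closure {z, g ^ ℓ, h} ≤ (secondAxisScalings (rootsOfUnity ℓ 𝔽)).comap φ := by
  have hω0 : ω ≠ 0 := hω.ne_zero (by positivity)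
  rw [Subgroup.closure_le]
  rintro x (rfl | rfl | hx)
  · exact ⟨1, Subgroup.one_mem _, hφz ▸ ScalesSecondAxis.one⟩
  · refine ⟨Units.mk0 ω hω0 ^ ℓ, ?_, ?_⟩
    · rw [mem_rootsOfUnity]
      ext
      simp [← pow_mul, ← sq, hω.pow_eq_one]
    · simpa using hφg.pow ℓ
  · rw [Set.mem_singleton_iff.mp hx]
    refine ⟨(Units.mk0 ω hω0)⁻¹ ^ ℓ, ?_, by simpa using hφh⟩
    rw [mem_rootsOfUnity]
    ext
    simp [← pow_mul, ← sq, hω.pow_eq_one]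

theorem exists_scalesSecondAxis_pow_mul_ne_one (hℓ : 0 < ℓ) (hω : IsPrimitiveRoot ω (ℓ ^ 2))
    (hφz : φ z = 1) (hφg : ScalesSecondAxis (φ g) ω) (hφh : ScalesSecondAxis (φ h) (ω⁻¹ ^ ℓ))
    {f : E} (hf : f ∈ Subgroup.closure {z, g ^ ℓ, h}) {j : ℕ} (hj : ¬ ℓ ∣ j) :
    ∃ u ≠ 1, ScalesSecondAxis (φ (g ^ j * f)) u := by
  obtain ⟨v, hv, hfv⟩ := closure_le_comap_secondAxisScalings hℓ hω hφz hφg hφh hf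
  refine ⟨ω ^ j * v, fun h1 => hj ?_, by rw [map_mul, map_pow]; exact (hφg.pow j).mul hfv⟩
  have hvℓ : (v : 𝔽) ^ ℓ = 1 := by
    simpa using congrArg Units.val ((mem_rootsOfUnity ℓ v).mp hv)
  have : ω ^ (j * ℓ) = 1 := by rw [pow_mul, ← one_pow ℓ, ← h1, mul_pow, hvℓ, mul_one]
  rw [hω.pow_eq_one_iff_dvd, sq] at this
  exact Nat.dvd_of_mul_dvd_mul_right hℓ this

end Scalings

theorem stmt14_general (ℓ : ℕ) (hℓ : ℓ.Prime)
    (𝔽 : Type) [Field 𝔽]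
    (ω : 𝔽) (hω : IsPrimitiveRoot ω (ℓ ^ 2))
    (E : Type) [Group E] (z g h : E)
    (hzord : orderOf z = ℓ) (hzcent : ∀ e : E, z * e = e * z)
    (hgord : orderOf g = ℓ ^ 2)
    (hrel : h * g * h⁻¹ = g * z)
    (hgen : Subgroup.closure {z, g, h} = (⊤ : Subgroup E))
    (φ : E →* MulAut (Multiplicative (𝔽 × 𝔽)))
    (hφz : ∀ d : 𝔽 × 𝔽, φ z (Multiplicative.ofAdd d) = Multiplicative.ofAdd d)
    (hφg : ∀ d : 𝔽 × 𝔽,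
      φ g (Multiplicative.ofAdd d) = Multiplicative.ofAdd (ω * d.1, ω * d.2))
    (hφh : ∀ d : 𝔽 × 𝔽,
      φ h (Multiplicative.ofAdd d) = Multiplicative.ofAdd (d.1, ω⁻¹ ^ ℓ * d.2))
    (lam : Multiplicative (𝔽 × 𝔽) ⋊[φ] E →* ℂˣ)
    (hlam : ∀ (d : 𝔽 × 𝔽) (f : E), f ∈ Subgroup.closure {z, g ^ ℓ, h} →
      lam ⟨Multiplicative.ofAdd d, f⟩ = 1)
    (χ : (Multiplicative (𝔽 × 𝔽) ⋊[φ] E) → ℂ) (hχ : IsIrredCharacter χ)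
    (hχz : χ (⟨1, z⟩ : Multiplicative (𝔽 × 𝔽) ⋊[φ] E) ≠
      χ (1 : Multiplicative (𝔽 × 𝔽) ⋊[φ] E)) :
    ∀ a : Multiplicative (𝔽 × 𝔽) ⋊[φ] E, (lam a : ℂ) * χ a = χ a := by
  intro a
  by_cases ha : a.right ∈ Subgroup.closure {z, g ^ ℓ, h}
  · rw [show lam a = 1 from hlam (toAdd a.left) a.right ha, Units.val_one, one_mul]
  obtain ⟨V, _, hV⟩ := hχ
  obtain rfl : χ = V.character := funext fun x => (hV x).symm
  suffices V.character a = 0 by rw [this, mul_zero]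
  have hφz₁ : φ z = 1 := MulEquiv.ext fun x => hφz (toAdd x)
  have hzℓ : z ^ ℓ = 1 := hzord ▸ pow_orderOf_eq_one z
  obtain ⟨j, hj, f, hf, hjf⟩ := exists_pow_mul_eq_of_notMem_closure hzcent hrel hgen
    (orderOf_pos_iff.mp (hgord ▸ pow_pos hℓ.pos 2)) ha
  obtain ⟨u, hu, hscale⟩ := exists_scalesSecondAxis_pow_mul_ne_one hℓ.pos hω hφz₁
    (fun y => by rw [hφg, mul_zero]) (fun y => hφh (0, y)) hf hj
  have hconj : h * a.right * h⁻¹ = z ^ j * a.right :=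
    hjf ▸ conj_pow_mul_eq_of_mem_closure hzcent hrel hzℓ hf j
  have hρz : V.ρ (SemidirectProduct.inr z) ≠ 1 := fun h1 =>
    hχz (by rw [← map_one V.ρ] at h1; simp only [FDRep.character]; exact congrArg _ h1)
  have hρzj : V.ρ (SemidirectProduct.inr (z ^ j)) ≠ 1 := by
    rw [map_pow, map_pow]
    exact pow_ne_one_of_not_dvd hℓ (by rw [← map_pow, ← map_pow, hzℓ, map_one, map_one]) hρz hj
  exact V.character_eq_zero_of_isConj_mul
    (SemidirectProduct.inr_mem_center (Subgroup.pow_mem _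
      (Subgroup.mem_center_iff.mpr fun e => (hzcent e).symm) j) (by rw [map_pow, hφz₁, one_pow]))
    hρzj (isConj_inr_mul_of_scalesSecondAxis a (by rw [map_pow, hφz₁, one_pow]) hconj hφh
      (hjf ▸ hscale) hu)

/-- Let `ℓ ≠ p` be primes, `n` the multiplicative order of `p` mod `ℓ²`, `𝔽` the field
with `p^n` elements and `ω ∈ 𝔽` a primitive `ℓ²`-th root of unity.  Let `E` be the group
generated by `z, g, h` with `z` central of order `ℓ`, `g` of order `ℓ²`, `h` of order `ℓ`
and `h g h⁻¹ = g z` (so `E ≅ (C_ℓ × C_{ℓ²}) ⋊ C_ℓ`, of order `ℓ⁴`).  Let `D := 𝔽 × 𝔽`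
(additively) and let `E` act on `D` by: `z` trivially, `g` by multiplication by `ω` on
both coordinates, and `h` trivially on the first coordinate and by multiplication by
`ω⁻ℓ` on the second.  Let `G := D ⋊ E` and `F₀ := ⟨z, g^ℓ, h⟩ ≤ E`.  If `λ : G → ℂˣ` is a
homomorphism whose kernel contains `D ⋊ F₀`, and `χ` is an irreducible complex character
of `G` with `χ(z) ≠ χ(1)` (`z` viewed as the central element `(0, z)` of `G`), then
`λ·χ = χ`, i.e. `λ(a)·χ(a) = χ(a)` for all `a ∈ G`. -/
theorem stmt14 (ℓ p n : ℕ) (hℓ : ℓ.Prime) (hp : p.Prime) (hℓp : ℓ ≠ p)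
    (hn : 0 < n) (hnmod : p ^ n ≡ 1 [MOD ℓ ^ 2])
    (hnmin : ∀ m : ℕ, 0 < m → p ^ m ≡ 1 [MOD ℓ ^ 2] → n ≤ m)
    (𝔽 : Type) [Field 𝔽] [Fintype 𝔽] (h𝔽 : Fintype.card 𝔽 = p ^ n)
    (ω : 𝔽) (hω : IsPrimitiveRoot ω (ℓ ^ 2))
    (E : Type) [Group E] (z g h : E)
    (hzord : orderOf z = ℓ) (hzcent : ∀ e : E, z * e = e * z)
    (hgord : orderOf g = ℓ ^ 2) (hhord : orderOf h = ℓ)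
    (hrel : h * g * h⁻¹ = g * z)
    (hgen : Subgroup.closure {z, g, h} = (⊤ : Subgroup E))
    (hcard : Nat.card E = ℓ ^ 4)
    (φ : E →* MulAut (Multiplicative (𝔽 × 𝔽)))
    (hφz : ∀ d : 𝔽 × 𝔽, φ z (Multiplicative.ofAdd d) = Multiplicative.ofAdd d)
    (hφg : ∀ d : 𝔽 × 𝔽,
      φ g (Multiplicative.ofAdd d) = Multiplicative.ofAdd (ω * d.1, ω * d.2))
    (hφh : ∀ d : 𝔽 × 𝔽,
      φ h (Multiplicative.ofAdd d) = Multiplicative.ofAdd (d.1, ω⁻¹ ^ ℓ * d.2))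
    (lam : Multiplicative (𝔽 × 𝔽) ⋊[φ] E →* ℂˣ)
    (hlam : ∀ (d : 𝔽 × 𝔽) (f : E), f ∈ Subgroup.closure {z, g ^ ℓ, h} →
      lam ⟨Multiplicative.ofAdd d, f⟩ = 1)
    (χ : (Multiplicative (𝔽 × 𝔽) ⋊[φ] E) → ℂ) (hχ : IsIrredCharacter χ)
    (hχz : χ (⟨1, z⟩ : Multiplicative (𝔽 × 𝔽) ⋊[φ] E) ≠
      χ (1 : Multiplicative (𝔽 × 𝔽) ⋊[φ] E)) :
    ∀ a : Multiplicative (𝔽 × 𝔽) ⋊[φ] E, (lam a : ℂ) * χ a = χ a :=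
  stmt14_general ℓ hℓ 𝔽 ω hω E z g h hzord hzcent hgord hrel hgen φ hφz hφg hφh lam hlam χ hχ hχz
end
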